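/- arXiv:2212.09402 — 2 statements merged into one kernel-verified Lean document; each statement's English description precedes it below -/
import Mathlib

section
/- Let (W,P) = (A_n, A_{k−1} × A_{n−k}), identify ^PW with k-element subsets of {1,…,n+1}, and fix μ ∈ ^PW together with a reduced word s_{i_1}⋯s_{i_m} for μ. For each λ ∈ ^PW there is at most one sequence λ_0 = ∅, λ_1, …, λ_m = λ of elements of ^PW such that for every j: λ_{j−1}s_{i_j} ∈ ^PW and λ_j ∈ {λ_{j−1}, λ_{j−1}s_{i_j}}. (Equivalently, |Path(λ, T^μ)| ≤ 1 in the extended Bruhat graph.) -/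
open Pointwise

/-- The adjacent transposition `s_{i+1} = (i+1, i+2)` in `S_{n+1}`. -/
def aGen (n : ℕ) (i : Fin n) : Equiv.Perm (Fin (n + 1)) :=
  Equiv.swap i.castSucc i.succ

/-- The product of a word in the adjacent transpositions. -/
def wordProdA (n : ℕ) (l : List (Fin n)) : Equiv.Perm (Fin (n + 1)) :=
  (l.map (aGen n)).prod

/-- The Coxeter length of `w ∈ S_{n+1}`: the minimal length of a word in the adjacent
transpositions with product `w`. -/
noncomputable def lenA (n : ℕ) (w : Equiv.Perm (Fin (n + 1))) : ℕ :=
  sInf {m | ∃ l : List (Fin n), l.length = m ∧ wordProdA n l = w}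

/-- The Young (parabolic) subgroup `P = S_k × S_{n+1-k}`: the stabilizer of `{1,…,k}` under
the action of permutations on subsets. -/
def youngSubgroup (n k : ℕ) : Subgroup (Equiv.Perm (Fin (n + 1))) :=
  MulAction.stabilizer (Equiv.Perm (Fin (n + 1)))
    ({x : Fin (n + 1) | (x : ℕ) < k} : Set (Fin (n + 1)))

/-- `w` is a minimal-length coset representative for `P\W`, i.e. `w ∈ ^PW`; these are in
bijection with the `k`-element subsets of `{1,…,n+1}`. -/
def IsMinRepA (n k : ℕ) (w : Equiv.Perm (Fin (n + 1))) : Prop :=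
  ∀ u ∈ youngSubgroup n k, lenA n w ≤ lenA n (u * w)

/-- A (directed) edge labelled `i` of the extended Bruhat graph of
`(Aₙ, A_{k-1} × A_{n-k})`: whenever `λ, λsᵢ ∈ ^PW` there are edges
`λ → λ`, `λ → λsᵢ`, `λsᵢ → λ`, `λsᵢ → λsᵢ`. -/
def GraphEdgeA (n k : ℕ) (x : Equiv.Perm (Fin (n + 1))) (i : Fin n)
    (y : Equiv.Perm (Fin (n + 1))) : Prop :=
  IsMinRepA n k x ∧ IsMinRepA n k (x * aGen n i) ∧ (y = x ∨ y = x * aGen n i)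

/-- `p` is a path (list of labelled steps) in the extended Bruhat graph starting at `x`. -/
def IsWalkA (n k : ℕ) : Equiv.Perm (Fin (n + 1)) →
    List (Fin n × Equiv.Perm (Fin (n + 1))) → Prop
  | _, [] => True
  | x, (i, y) :: p => GraphEdgeA n k x i y ∧ IsWalkA n k y p

/-- The endpoint of a path starting at `x`. -/
def walkEndA (n : ℕ) : Equiv.Perm (Fin (n + 1)) →
    List (Fin n × Equiv.Perm (Fin (n + 1))) → Equiv.Perm (Fin (n + 1))
  | x, [] => x
  | _, (_, y) :: p => walkEndA n y p

namespace PathUnique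

variable {n : ℕ}

/-- The set of inversions of a permutation of `Fin (n+1)`. -/
def invSet (n : ℕ) (w : Equiv.Perm (Fin (n + 1))) : Finset (Fin (n + 1) × Fin (n + 1)) :=
  Finset.univ.filter (fun p => p.1 < p.2 ∧ w p.2 < w p.1)

/-- The number of inversions. -/
def invA (n : ℕ) (w : Equiv.Perm (Fin (n + 1))) : ℕ := (invSet n w).card

lemma perm_apply_inv_self {α : Type*} (f : Equiv.Perm α) (x : α) : f (f⁻¹ x) = x :=
  Equiv.Perm.eq_inv_iff_eq.mp rfl

lemma perm_inv_apply_self {α : Type*} (f : Equiv.Perm α) (x : α) : f⁻¹ (f x) = x :=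
  Equiv.Perm.inv_eq_iff_eq.mpr rfl

lemma aGen_castSucc (c : Fin n) : aGen n c c.castSucc = c.succ := Equiv.swap_apply_left _ _

lemma aGen_succ (c : Fin n) : aGen n c c.succ = c.castSucc := Equiv.swap_apply_right _ _

lemma aGen_other {c : Fin n} {x : Fin (n+1)} (h1 : x ≠ c.castSucc) (h2 : x ≠ c.succ) :
    aGen n c x = x := Equiv.swap_apply_of_ne_of_ne h1 h2

lemma aGen_mul_self (c : Fin n) : aGen n c * aGen n c = 1 := Equiv.swap_mul_self _ _

lemma aGen_aGen (c : Fin n) (x : Fin (n+1)) : aGen n c (aGen n c x) = x := by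
  have := congrArg (fun e => e x) (aGen_mul_self c); simpa using this

lemma aGen_inv (c : Fin n) : (aGen n c)⁻¹ = aGen n c := by
  rw [eq_comm, eq_inv_iff_mul_eq_one]; exact aGen_mul_self c

/-- `aGen` preserves the order of every pair except `(castSucc c, succ c)`. -/
lemma aGen_lt_aGen {c : Fin n} {a b : Fin (n+1)} (hab : a < b)
    (hne : ¬(a = c.castSucc ∧ b = c.succ)) : aGen n c a < aGen n c b := by
  have hcs : c.castSucc < c.succ := Fin.castSucc_lt_succ (i := c)
  rcases eq_or_ne a c.castSucc with ha | ha
  · rcases eq_or_ne b c.succ with hb | hb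
    · exact absurd ⟨ha, hb⟩ hne
    · -- a = castSucc c, b ≠ succ c, b > castSucc c so b > succ c
      subst ha
      have hbs : c.succ < b := by
        rcases lt_or_ge c.succ b with h | h
        · exact h
        · have : b = c.succ := le_antisymm h (Fin.castSucc_lt_iff_succ_le.mp hab)
          exact absurd this hb
      rw [aGen_castSucc, aGen_other (ne_of_gt (lt_trans hcs hbs)) (ne_of_gt hbs)]
      exact hbs
  · rcases eq_or_ne a c.succ with ha2 | ha2
    · subst ha2
      have hb1 : b ≠ c.castSucc := ne_of_gt (lt_trans hcs hab)
      have hb2 : b ≠ c.succ := ne_of_gt hab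
      rw [aGen_succ, aGen_other hb1 hb2]
      exact lt_trans hcs hab
    · rcases eq_or_ne b c.castSucc with hb | hb
      · subst hb
        rw [aGen_castSucc, aGen_other ha ha2]
        exact lt_trans hab hcs
      · rcases eq_or_ne b c.succ with hb2 | hb2
        · subst hb2
          rw [aGen_succ, aGen_other ha ha2]
          have : a ≤ c.castSucc := Fin.le_castSucc_iff.mpr hab
          exact lt_of_le_of_ne this ha
        · rw [aGen_other ha ha2, aGen_other hb hb2]; exact hab


open Finset in
lemma invSet_mem {w : Equiv.Perm (Fin (n+1))} {p : Fin (n+1) × Fin (n+1)} :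
    p ∈ invSet n w ↔ p.1 < p.2 ∧ w p.2 < w p.1 := by
  simp [invSet]

lemma pair_mem_invSet_mul {w : Equiv.Perm (Fin (n+1))} {c : Fin n} :
    (c.castSucc, c.succ) ∈ invSet n (w * aGen n c) ↔ w c.castSucc < w c.succ := by
  rw [invSet_mem]
  simp only [Equiv.Perm.mul_apply, aGen_castSucc, aGen_succ]
  exact and_iff_right (Fin.castSucc_lt_succ (i := c))

lemma pair_mem_invSet {w : Equiv.Perm (Fin (n+1))} {c : Fin n} :
    (c.castSucc, c.succ) ∈ invSet n w ↔ w c.succ < w c.castSucc := by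
  rw [invSet_mem]
  exact and_iff_right (Fin.castSucc_lt_succ (i := c))

/-- The bijection between inversions of `w * aGen c` and of `w`, away from the crossing pair. -/
lemma card_erase_invSet_mul (w : Equiv.Perm (Fin (n+1))) (c : Fin n) :
    ((invSet n (w * aGen n c)).erase (c.castSucc, c.succ)).card
      = ((invSet n w).erase (c.castSucc, c.succ)).card := by
  apply Finset.card_bij' (fun p _ => (aGen n c p.1, aGen n c p.2))
    (fun p _ => (aGen n c p.1, aGen n c p.2))
  · -- maps into
    intro p hp
    rw [Finset.mem_erase, invSet_mem] at hp
    obtain ⟨hne, h12, hinv⟩ := hp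
    have hne' : ¬(p.1 = c.castSucc ∧ p.2 = c.succ) := by
      intro ⟨h1, h2⟩; exact hne (Prod.ext h1 h2)
    rw [Finset.mem_erase, invSet_mem]
    refine ⟨?_, aGen_lt_aGen h12 hne', ?_⟩
    · intro h
      have h1 : aGen n c p.1 = c.castSucc := congrArg Prod.fst h
      have h2 : aGen n c p.2 = c.succ := congrArg Prod.snd h
      have e1 : p.1 = c.succ := by
        have := congrArg (aGen n c) h1; rwa [aGen_aGen, aGen_castSucc] at this
      have e2 : p.2 = c.castSucc := by
        have := congrArg (aGen n c) h2; rwa [aGen_aGen, aGen_succ] at this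
      rw [e1, e2] at h12
      exact absurd h12 (not_lt.mpr (Fin.castSucc_lt_succ (i := c)).le)
    · simpa [Equiv.Perm.mul_apply, aGen_aGen] using hinv
  · -- maps back
    intro p hp
    rw [Finset.mem_erase, invSet_mem] at hp
    obtain ⟨hne, h12, hinv⟩ := hp
    have hne' : ¬(p.1 = c.castSucc ∧ p.2 = c.succ) := by
      intro ⟨h1, h2⟩; exact hne (Prod.ext h1 h2)
    rw [Finset.mem_erase, invSet_mem]
    refine ⟨?_, aGen_lt_aGen h12 hne', ?_⟩
    · intro h
      have h1 : aGen n c p.1 = c.castSucc := congrArg Prod.fst h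
      have h2 : aGen n c p.2 = c.succ := congrArg Prod.snd h
      have e1 : p.1 = c.succ := by
        have := congrArg (aGen n c) h1; rwa [aGen_aGen, aGen_castSucc] at this
      have e2 : p.2 = c.castSucc := by
        have := congrArg (aGen n c) h2; rwa [aGen_aGen, aGen_succ] at this
      rw [e1, e2] at h12
      exact absurd h12 (not_lt.mpr (Fin.castSucc_lt_succ (i := c)).le)
    · simp only [Equiv.Perm.mul_apply]
      rwa [aGen_aGen, aGen_aGen]
  · intro p _; simp [aGen_aGen]
  · intro p _; simp [aGen_aGen]

lemma invA_mul_aGen_of_lt {w : Equiv.Perm (Fin (n+1))} {c : Fin n}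
    (h : w c.castSucc < w c.succ) : invA n (w * aGen n c) = invA n w + 1 := by
  have hmem : (c.castSucc, c.succ) ∈ invSet n (w * aGen n c) := pair_mem_invSet_mul.mpr h
  have hnmem : (c.castSucc, c.succ) ∉ invSet n w := by
    rw [pair_mem_invSet]; exact not_lt.mpr h.le
  have h1 := Finset.card_erase_of_mem hmem
  have h2 := card_erase_invSet_mul w c
  rw [Finset.erase_eq_of_notMem hnmem] at h2
  unfold invA
  have hpos : 0 < (invSet n (w * aGen n c)).card := Finset.card_pos.mpr ⟨_, hmem⟩
  omega

lemma aGen_values_ne {w : Equiv.Perm (Fin (n+1))} (c : Fin n) :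
    w c.castSucc ≠ w c.succ :=
  fun h => absurd (w.injective h) (Fin.castSucc_lt_succ (i := c)).ne

lemma invA_mul_aGen_of_gt {w : Equiv.Perm (Fin (n+1))} {c : Fin n}
    (h : w c.succ < w c.castSucc) : invA n w = invA n (w * aGen n c) + 1 := by
  have h' : (w * aGen n c) c.castSucc < (w * aGen n c) c.succ := by
    simpa [Equiv.Perm.mul_apply, aGen_castSucc, aGen_succ] using h
  have := invA_mul_aGen_of_lt h'
  rwa [mul_assoc, aGen_mul_self, mul_one] at this

lemma invA_mul_aGen_le (w : Equiv.Perm (Fin (n+1))) (c : Fin n) :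
    invA n (w * aGen n c) ≤ invA n w + 1 := by
  rcases lt_or_gt_of_ne (aGen_values_ne (w := w) c) with h | h
  · exact (invA_mul_aGen_of_lt h).le
  · have := invA_mul_aGen_of_gt h; omega

lemma wordProdA_nil : wordProdA n [] = 1 := rfl

lemma wordProdA_append (l₁ l₂ : List (Fin n)) :
    wordProdA n (l₁ ++ l₂) = wordProdA n l₁ * wordProdA n l₂ := by
  unfold wordProdA; rw [List.map_append, List.prod_append]

lemma wordProdA_concat (l : List (Fin n)) (c : Fin n) :
    wordProdA n (l ++ [c]) = wordProdA n l * aGen n c := by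
  rw [wordProdA_append]
  have : wordProdA n [c] = aGen n c := by simp [wordProdA]
  rw [this]

lemma invA_le_word (l : List (Fin n)) : invA n (wordProdA n l) ≤ l.length := by
  induction l using List.reverseRecOn with
  | nil =>
    have : invA n (wordProdA n ([] : List (Fin n))) = 0 := by
      unfold invA invSet
      rw [Finset.card_eq_zero, Finset.eq_empty_iff_forall_notMem]
      intro p hp
      rw [Finset.mem_filter] at hp
      have h1 := hp.2.1
      have h2 := hp.2.2
      simp only [wordProdA_nil, Equiv.Perm.one_apply] at h2
      exact absurd h1 (not_lt.mpr h2.le)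
    simp [this]
  | append_singleton l c ih =>
    rw [wordProdA_concat]
    calc invA n (wordProdA n l * aGen n c) ≤ invA n (wordProdA n l) + 1 :=
          invA_mul_aGen_le _ _
    _ ≤ l.length + 1 := by omega
    _ = (l ++ [c]).length := by simp

lemma strictMono_le_apply {f : Fin (n+1) → Fin (n+1)} (h : StrictMono f) (x : Fin (n+1)) :
    x ≤ f x := by
  suffices H : ∀ m : ℕ, ∀ y : Fin (n+1), (y : ℕ) = m → m ≤ (f y : ℕ) by
    have := H x x rfl
    exact Fin.le_def.mpr (by simpa using this)
  intro m
  induction m with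
  | zero => intro y _; exact Nat.zero_le _
  | succ m ih =>
    intro y hy
    have hm : m < n + 1 := by omega
    have hyy : (⟨m, hm⟩ : Fin (n+1)) < y := by
      rw [Fin.lt_def]; simp [hy]
    have h1 := h hyy
    have h2 := ih ⟨m, hm⟩ rfl
    rw [Fin.lt_def] at h1
    omega

lemma strictMono_eq_one {w : Equiv.Perm (Fin (n+1))} (h : StrictMono (⇑w)) : w = 1 := by
  have h2 : StrictMono (⇑w⁻¹) := by
    intro a b hab
    rcases lt_trichotomy (w⁻¹ a) (w⁻¹ b) with hc | hc | hc
    · exact hc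
    · exact absurd (congrArg w hc) (by simp [perm_apply_inv_self]; exact hab.ne)
    · have := h hc
      simp only [perm_apply_inv_self] at this
      exact absurd hab (not_lt.mpr this.le)
  ext x
  have h1 : x ≤ w x := strictMono_le_apply h x
  have h3 : x ≤ w⁻¹ x := strictMono_le_apply h2 x
  have h4 : w x ≤ x := by
    have := h.monotone h3
    rwa [perm_apply_inv_self] at this
  have : w x = x := le_antisymm h4 h1
  simp [this]

lemma exists_descent {w : Equiv.Perm (Fin (n+1))} (h : w ≠ 1) :
    ∃ c : Fin n, w c.succ < w c.castSucc := by
  by_contra hc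
  push_neg at hc
  apply h
  apply strictMono_eq_one
  rw [Fin.strictMono_iff_lt_succ]
  intro i
  exact lt_of_le_of_ne (hc i) (aGen_values_ne i)

lemma exists_word_invA (w : Equiv.Perm (Fin (n+1))) :
    ∃ l : List (Fin n), l.length = invA n w ∧ wordProdA n l = w := by
  generalize hm : invA n w = m
  induction m generalizing w with
  | zero =>
    have : w = 1 := by
      apply strictMono_eq_one
      intro a b hab
      rcases lt_trichotomy (w a) (w b) with hc | hc | hc
      · exact hc
      · exact absurd (w.injective hc) hab.ne
      · exfalso
        have : (a, b) ∈ invSet n w := invSet_mem.mpr ⟨hab, hc⟩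
        have hpos : 0 < (invSet n w).card := Finset.card_pos.mpr ⟨_, this⟩
        unfold invA at hm; omega
    exact ⟨[], rfl, by rw [this, wordProdA_nil]⟩
  | succ m ih =>
    have hne : w ≠ 1 := by
      intro h
      subst h
      have : invA n (1 : Equiv.Perm (Fin (n+1))) = 0 := by
        unfold invA invSet
        rw [Finset.card_eq_zero, Finset.eq_empty_iff_forall_notMem]
        intro p hp
        rw [Finset.mem_filter] at hp
        exact absurd hp.2.1 (not_lt.mpr hp.2.2.le)
      omega
    obtain ⟨c, hc⟩ := exists_descent hne
    have hstep := invA_mul_aGen_of_gt hc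
    have hm' : invA n (w * aGen n c) = m := by omega
    obtain ⟨l, hl, hp⟩ := ih _ hm'
    refine ⟨l ++ [c], by simp [hl, hm'] , ?_⟩
    rw [wordProdA_concat, hp, mul_assoc, aGen_mul_self, mul_one]

lemma lenA_eq_invA (w : Equiv.Perm (Fin (n+1))) : lenA n w = invA n w := by
  obtain ⟨l, hl, hp⟩ := exists_word_invA w
  apply le_antisymm
  · exact Nat.sInf_le ⟨l, hl, hp⟩
  · have hne : {m | ∃ l : List (Fin n), l.length = m ∧ wordProdA n l = w}.Nonempty :=
      ⟨invA n w, l, hl, hp⟩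
    obtain ⟨l', hl', hp'⟩ := Nat.sInf_mem hne
    calc invA n w = invA n (wordProdA n l') := by rw [hp']
    _ ≤ l'.length := invA_le_word l'
    _ = lenA n w := hl'

lemma lenA_le_word {w : Equiv.Perm (Fin (n+1))} {l : List (Fin n)}
    (h : wordProdA n l = w) : lenA n w ≤ l.length := Nat.sInf_le ⟨l, rfl, h⟩

lemma lenA_mul_le (a b : Equiv.Perm (Fin (n+1))) :
    lenA n (a * b) ≤ lenA n a + lenA n b := by
  obtain ⟨la, hla, hpa⟩ := exists_word_invA a
  obtain ⟨lb, hlb, hpb⟩ := exists_word_invA b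
  calc lenA n (a * b) ≤ (la ++ lb).length := lenA_le_word (by rw [wordProdA_append, hpa, hpb])
  _ = invA n a + invA n b := by simp [hla, hlb]
  _ = lenA n a + lenA n b := by rw [lenA_eq_invA, lenA_eq_invA]

lemma invA_inv (w : Equiv.Perm (Fin (n+1))) : invA n w⁻¹ = invA n w := by
  unfold invA
  apply Finset.card_bij' (fun p _ => (w⁻¹ p.2, w⁻¹ p.1)) (fun p _ => (w p.2, w p.1))
  · intro p hp
    rw [invSet_mem] at hp ⊢
    refine ⟨hp.2, ?_⟩
    simp only [perm_apply_inv_self]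
    exact hp.1
  · intro p hp
    rw [invSet_mem] at hp ⊢
    refine ⟨hp.2, ?_⟩
    simp only [perm_inv_apply_self]
    exact hp.1
  · intro p _; simp
  · intro p _; simp

lemma invA_aGen_mul_of_lt {w : Equiv.Perm (Fin (n+1))} {c : Fin n}
    (h : w⁻¹ c.castSucc < w⁻¹ c.succ) : invA n (aGen n c * w) = invA n w + 1 := by
  have : invA n ((aGen n c * w)⁻¹) = invA n w⁻¹ + 1 := by
    rw [mul_inv_rev, aGen_inv]
    exact invA_mul_aGen_of_lt h
  rwa [invA_inv, invA_inv] at this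

lemma invA_aGen_mul_of_gt {w : Equiv.Perm (Fin (n+1))} {c : Fin n}
    (h : w⁻¹ c.succ < w⁻¹ c.castSucc) : invA n w = invA n (aGen n c * w) + 1 := by
  have : invA n w⁻¹ = invA n ((aGen n c * w)⁻¹) + 1 := by
    rw [mul_inv_rev, aGen_inv]
    exact invA_mul_aGen_of_gt h
  rwa [invA_inv, invA_inv] at this


variable {k : ℕ}

lemma mem_young_iff {u : Equiv.Perm (Fin (n+1))} :
    u ∈ youngSubgroup n k ↔ ∀ x : Fin (n+1), ((u x : ℕ) < k ↔ (x : ℕ) < k) := by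
  rw [youngSubgroup]
  rw [MulAction.mem_stabilizer_iff]
  constructor
  · intro hu x
    constructor
    · intro hx
      have : u x ∈ u • ({y : Fin (n + 1) | (y : ℕ) < k} : Set (Fin (n + 1))) := by
        rw [hu]; exact hx
      obtain ⟨y, hy, hyx⟩ := this
      have : u y = u x := hyx
      have := u.injective this
      rwa [this] at hy
    · intro hx
      have : u x ∈ u • ({y : Fin (n + 1) | (y : ℕ) < k} : Set (Fin (n + 1))) :=
        ⟨x, hx, rfl⟩
      rwa [hu] at this
  · intro h
    ext y
    constructor
    · rintro ⟨x, hx, rfl⟩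
      exact (h x).mpr hx
    · intro hy
      refine ⟨u⁻¹ y, ?_, by simp [Equiv.Perm.smul_def]⟩
      have := (h (u⁻¹ y))
      simp only [perm_apply_inv_self] at this
      exact this.mp hy

lemma aGen_mem_young {c : Fin n} (h : (c : ℕ) + 1 < k ∨ k ≤ (c : ℕ)) :
    aGen n c ∈ youngSubgroup n k := by
  rw [mem_young_iff]
  intro x
  have hcs : ((c.castSucc : Fin (n+1)) : ℕ) = (c : ℕ) := rfl
  have hss : ((c.succ : Fin (n+1)) : ℕ) = (c : ℕ) + 1 := rfl
  rcases eq_or_ne x c.castSucc with hx | hx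
  · subst hx; rw [aGen_castSucc, hss, hcs]; omega
  · rcases eq_or_ne x c.succ with hx2 | hx2
    · subst hx2; rw [aGen_succ, hss, hcs]; omega
    · rw [aGen_other hx hx2]

/-- A minimal representative has no descents inside the blocks. -/
lemma minrep_no_block_descent {μ : Equiv.Perm (Fin (n+1))} (hmin : IsMinRepA n k μ)
    {c : Fin n} (h : (c : ℕ) + 1 < k ∨ k ≤ (c : ℕ)) :
    μ⁻¹ c.castSucc < μ⁻¹ c.succ := by
  have hne : μ⁻¹ c.castSucc ≠ μ⁻¹ c.succ :=
    fun he => absurd (μ⁻¹.injective he) (Fin.castSucc_lt_succ (i := c)).ne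
  rcases lt_or_gt_of_ne hne with hlt | hgt
  · exact hlt
  · exfalso
    have hstep := invA_aGen_mul_of_gt (w := μ) (c := c) hgt
    have hle := hmin (aGen n c) (aGen_mem_young h)
    rw [lenA_eq_invA, lenA_eq_invA] at hle
    omega

/-- Minimal representatives are increasing on blocks. -/
lemma minrep_block_mono {μ : Equiv.Perm (Fin (n+1))} (hmin : IsMinRepA n k μ)
    {a b : Fin (n+1)} (hab : a < b) (hblock : (b : ℕ) < k ∨ k ≤ (a : ℕ)) :
    μ⁻¹ a < μ⁻¹ b := by
  obtain ⟨d, hd⟩ : ∃ d : ℕ, (b : ℕ) = (a : ℕ) + d + 1 := by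
    have := Fin.lt_def.mp hab; exact ⟨(b : ℕ) - (a : ℕ) - 1, by omega⟩
  induction d generalizing a b with
  | zero =>
    have hc : (a : ℕ) < n := by have := b.isLt; omega
    set c : Fin n := ⟨(a : ℕ), hc⟩ with hcdef
    have hca : c.castSucc = a := by
      apply Fin.ext; simp [hcdef]
    have hcb : c.succ = b := by
      apply Fin.ext; simp [hcdef, hd]
    have : μ⁻¹ c.castSucc < μ⁻¹ c.succ := by
      apply minrep_no_block_descent hmin
      simp only [hcdef]
      omega
    rwa [hca, hcb] at this
  | succ d ih =>
    have hmidlt : (a : ℕ) + d + 1 < n + 1 := by have := b.isLt; omega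
    set mid : Fin (n+1) := ⟨(a : ℕ) + d + 1, hmidlt⟩ with hmiddef
    have hmidval : (mid : ℕ) = (a : ℕ) + d + 1 := rfl
    have h1 : μ⁻¹ a < μ⁻¹ mid := by
      apply ih (b := mid)
      · rw [Fin.lt_def]; omega
      · omega
      · omega
    have h2 : μ⁻¹ mid < μ⁻¹ b := by
      have hc : (mid : ℕ) < n := by have := b.isLt; omega
      set c : Fin n := ⟨(mid : ℕ), hc⟩ with hcdef
      have hcval : (c : ℕ) = (mid : ℕ) := rfl
      have hca : c.castSucc = mid := by apply Fin.ext; simp [Fin.coe_castSucc, hcval]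
      have hcb : c.succ = b := by apply Fin.ext; rw [Fin.val_succ]; omega
      have : μ⁻¹ c.castSucc < μ⁻¹ c.succ := by
        apply minrep_no_block_descent hmin
        omega
      rwa [hca, hcb] at this
    exact lt_trans h1 h2

/-- Key parity fact: if `lam` and `lam * s_c` are both minimal representatives, exactly one
of the two crossing columns carries a token. -/
lemma exactly_one_token {lam : Equiv.Perm (Fin (n+1))} {c : Fin n}
    (h1 : IsMinRepA n k lam) (h2 : IsMinRepA n k (lam * aGen n c)) :
    ¬(((lam c.castSucc : Fin (n+1)) : ℕ) < k ↔ ((lam c.succ : Fin (n+1)) : ℕ) < k) := by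
  intro hiff
  set u : Equiv.Perm (Fin (n+1)) := lam * aGen n c * lam⁻¹ with hudef
  have humem : u ∈ youngSubgroup n k := by
    rw [mem_young_iff]
    intro x
    have : u x = lam (aGen n c (lam⁻¹ x)) := rfl
    rw [this]
    rcases eq_or_ne (lam⁻¹ x) c.castSucc with hz | hz
    · rw [hz, aGen_castSucc]
      have hx : x = lam c.castSucc := by rw [← hz, perm_apply_inv_self]
      rw [hx]; exact hiff.symm
    · rcases eq_or_ne (lam⁻¹ x) c.succ with hz2 | hz2
      · rw [hz2, aGen_succ]
        have hx : x = lam c.succ := by rw [← hz2, perm_apply_inv_self]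
        rw [hx]; exact hiff
      · rw [aGen_other hz hz2, perm_apply_inv_self]
  have hul : u * lam = lam * aGen n c := by
    rw [hudef]; group
  have hle1 : lenA n lam ≤ lenA n (lam * aGen n c) := by
    have := h1 u humem; rwa [hul] at this
  have hle2 : lenA n (lam * aGen n c) ≤ lenA n lam := by
    have := h2 u⁻¹ (Subgroup.inv_mem _ humem)
    rwa [show u⁻¹ * (lam * aGen n c) = lam by rw [hudef]; group] at this
  have heq : lenA n (lam * aGen n c) = lenA n lam := le_antisymm hle2 hle1
  rw [lenA_eq_invA, lenA_eq_invA] at heq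
  rcases lt_or_gt_of_ne (aGen_values_ne (w := lam) c) with hlt | hgt
  · have := invA_mul_aGen_of_lt hlt; omega
  · have := invA_mul_aGen_of_gt hgt; omega


/-- The abstract combinatorial core: two systems of "token membership functions" `f`, `g`
evolving along the same word, satisfying the local crossing constraints together with the
key property of reduced words of minimal representatives, and agreeing at both ends,
agree everywhere. -/
lemma core (m kk : ℕ) (c : ℕ → ℕ) (f g : ℕ → ℕ → Prop) (wv : ℕ → ℕ → ℕ)
    (hfg0 : ∀ x, f 0 x ↔ g 0 x) (hfgm : ∀ x, f m x ↔ g m x)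
    (hR1f : ∀ j < m, ∀ x, x ≠ c j → x ≠ c j + 1 → (f (j+1) x ↔ f j x))
    (hR1g : ∀ j < m, ∀ x, x ≠ c j → x ≠ c j + 1 → (g (j+1) x ↔ g j x))
    (hXf1 : ∀ j < m, ¬(f j (c j) ↔ f j (c j + 1)))
    (hXg1 : ∀ j < m, ¬(g j (c j) ↔ g j (c j + 1)))
    (hXf2 : ∀ j < m, ¬(f (j+1) (c j) ↔ f (j+1) (c j + 1)))
    (hXg2 : ∀ j < m, ¬(g (j+1) (c j) ↔ g (j+1) (c j + 1)))
    (hKEY : ∀ j < m, wv j (c j) < kk ∧ ¬ wv j (c j + 1) < kk)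
    (hW1 : ∀ j < m, ∀ x, x ≠ c j → x ≠ c j + 1 → wv (j+1) x = wv j x)
    (hW2 : ∀ j < m, wv (j+1) (c j) = wv j (c j + 1)) :
    ∀ j ≤ m, ∀ x, f j x ↔ g j x := by
  classical
  by_contra hcon
  push_neg at hcon
  obtain ⟨jw, hjw, xw, hxw0⟩ := hcon
  -- X j x : the two systems disagree at time j, column x
  set X : ℕ → ℕ → Prop := fun j x => ¬(f j x ↔ g j x) with hXdef
  have hxw : X jw xw := by simp only [hXdef]; tauto
  -- derived step relations for X
  have D1 : ∀ j < m, ∀ x, x ≠ c j → x ≠ c j + 1 → (X (j+1) x ↔ X j x) := by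
    intro j hj x h1 h2
    simp only [hXdef, hR1f j hj x h1 h2, hR1g j hj x h1 h2]
  have D2 : ∀ j < m, (X j (c j) ↔ X j (c j + 1)) := by
    intro j hj
    have hf := hXf1 j hj; have hg := hXg1 j hj
    simp only [hXdef]; tauto
  have D3 : ∀ j < m, (X (j+1) (c j) ↔ X (j+1) (c j + 1)) := by
    intro j hj
    have hf := hXf2 j hj; have hg := hXg2 j hj
    simp only [hXdef]; tauto
  have hX0 : ∀ x, ¬ X 0 x := by intro x; simp only [hXdef, not_not]; exact hfg0 x
  have hXm : ∀ x, ¬ X m x := by intro x; simp only [hXdef, not_not]; exact hfgm x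
  -- minimal disagreeing column
  have hPex : ∃ x, ∃ j ≤ m, X j x := ⟨xw, jw, hjw, hxw⟩
  set xs : ℕ := Nat.find hPex with hxsdef
  obtain ⟨js, hjs, hXjs⟩ := Nat.find_spec hPex
  have hxmin : ∀ y < xs, ∀ j ≤ m, ¬ X j y := by
    intro y hy j hj hXy
    exact Nat.find_min hPex hy ⟨j, hj, hXy⟩
  -- js is strictly between 0 and m
  have hjs0 : js ≠ 0 := fun h => hX0 xs (h ▸ hXjs)
  have hjsm : js ≠ m := fun h => hXm xs (h ▸ hXjs)
  -- the largest j₀ ≤ js with ¬ X j₀ xs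
  set j0 : ℕ := Nat.findGreatest (fun t => ¬ X t xs) js with hj0def
  have hj0spec : ¬ X j0 xs := Nat.findGreatest_spec (P := fun t => ¬ X t xs) (Nat.zero_le js) (hX0 xs)
  have hj0le : j0 ≤ js := Nat.findGreatest_le (P := fun t => ¬ X t xs) js
  have hj0lt : j0 < js := lt_of_le_of_ne hj0le (fun h => (h ▸ hj0spec) hXjs)
  have hbetween1 : ∀ t, j0 < t → t ≤ js → X t xs := by
    intro t ht1 ht2
    by_contra hXt
    have hXt' : ¬ X t xs := by simp only [hXdef, not_not]; exact hXt
    exact absurd (Nat.le_findGreatest (P := fun t => ¬ X t xs) ht2 hXt') (not_le.mpr ht1)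
  -- the smallest end point: least d with ¬ X (js + d) xs
  have hQex : ∃ d, ¬ X (js + d) xs := ⟨m - js, by
    have : js + (m - js) = m := by omega
    rw [this]; exact hXm xs⟩
  set d0 : ℕ := Nat.find hQex with hd0def
  have hd0spec : ¬ X (js + d0) xs := Nat.find_spec hQex
  have hd0pos : 0 < d0 := by
    rcases Nat.eq_zero_or_pos d0 with h | h
    · exfalso; apply hd0spec; rw [h]; simpa using hXjs
    · exact h
  have hd0le : d0 ≤ m - js := Nat.find_min' hQex (by
    have : js + (m - js) = m := by omega
    rw [this]; exact hXm xs)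
  have hbetween2 : ∀ t, js ≤ t → t < js + d0 → X t xs := by
    intro t ht1 ht2
    have := Nat.find_min hQex (m := t - js) (by omega)
    simp only [not_not] at this
    have he : js + (t - js) = t := by omega
    rwa [he] at this
  set j1 : ℕ := j0 + 1 with hj1def
  set j2 : ℕ := js + d0 - 1 with hj2def
  have hj2m : j2 + 1 ≤ m := by omega
  have hbetween : ∀ t, j1 ≤ t → t ≤ j2 → X t xs := by
    intro t ht1 ht2
    rcases le_or_gt t js with h | h
    · exact hbetween1 t (by omega) h
    · exact hbetween2 t (by omega) (by omega)
  have hj1le : j1 ≤ j2 := by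
    -- j1 ≤ js ≤ j2
    omega
  -- analysis of step j0 : column xs must be c j0
  have hj0m : j0 < m := by omega
  have hstep1 : xs = c j0 := by
    have hXj1 : X j1 xs := hbetween j1 le_rfl hj1le
    rcases eq_or_ne xs (c j0) with h | h
    · exact h
    rcases eq_or_ne xs (c j0 + 1) with h2 | h2
    · exfalso
      -- then column (c j0) = xs - 1 also disagrees at time j1, contradicting minimality
      have := (D3 j0 hj0m).mpr (h2 ▸ hXj1)
      exact hxmin (c j0) (by omega) j1 (by omega) this
    · exact absurd ((D1 j0 hj0m xs h h2).mp hXj1) hj0spec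
  have hstep2 : xs = c j2 := by
    have hXj2 : X j2 xs := hbetween j2 hj1le le_rfl
    have hj2m' : j2 < m := by omega
    have hnX : ¬ X (j2 + 1) xs := by
      have : j2 + 1 = js + d0 := by omega
      rw [this]; exact hd0spec
    rcases eq_or_ne xs (c j2) with h | h
    · exact h
    rcases eq_or_ne xs (c j2 + 1) with h2 | h2
    · exfalso
      have := (D2 j2 hj2m').mpr (h2 ▸ hXj2)
      exact hxmin (c j2) (by omega) j2 (by omega) this
    · exact absurd ((D1 j2 hj2m' xs h h2).mpr hXj2) hnX
  -- token values at column xs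
  have hv1 : ¬ wv j1 xs < kk := by
    have h2 := hW2 j0 hj0m
    have h3 := (hKEY j0 hj0m).2
    rw [← hstep1] at h2 h3
    rw [hj1def, h2]
    exact h3
  have hv2 : wv j2 xs < kk := by
    have := (hKEY j2 (by omega)).1
    rwa [← hstep2] at this
  have hj1j2 : j1 < j2 := by
    rcases lt_or_ge j1 j2 with h | h
    · exact h
    · exfalso
      have : j1 = j2 := le_antisymm hj1le h
      rw [this] at hv1; exact hv1 hv2
  -- find the first time t in (j1, j2] where the token value drops below kk
  have hRex : ∃ d, wv (j1 + 1 + d) xs < kk ∧ j1 + 1 + d ≤ j2 := by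
    refine ⟨j2 - j1 - 1, ?_, by omega⟩
    have he : j1 + 1 + (j2 - j1 - 1) = j2 := by omega
    rw [he]; exact hv2
  set d1 : ℕ := Nat.find hRex with hd1def
  obtain ⟨hd1v, hd1le⟩ := Nat.find_spec hRex
  set t : ℕ := j1 + 1 + d1 with htdef
  have htprev : ¬ wv (t - 1) xs < kk := by
    rcases Nat.eq_zero_or_pos d1 with h | h
    · have : t - 1 = j1 := by omega
      rw [this]; exact hv1
    · have hmin2 := Nat.find_min hRex (m := d1 - 1) (by omega)
      by_contra hcc
      apply hmin2
      have he : j1 + 1 + (d1 - 1) = t - 1 := by omega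
      rw [he]
      exact ⟨hcc, by omega⟩
  have htm : t - 1 < m := by omega
  have ht1 : t - 1 + 1 = t := by omega
  -- the value changed at step t-1, so xs is one of the two crossing columns
  have hchange : xs = c (t-1) ∨ xs = c (t-1) + 1 := by
    rcases eq_or_ne xs (c (t-1)) with h | h
    · exact Or.inl h
    rcases eq_or_ne xs (c (t-1) + 1) with h2 | h2
    · exact Or.inr h2
    · exfalso
      have := hW1 (t-1) htm xs h h2
      rw [ht1] at this
      rw [this] at hd1v
      exact htprev hd1v
  rcases hchange with h | h
  · -- xs = c (t-1) : contradicts KEY (value before the step should be < kk)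
    have := (hKEY (t-1) htm).1
    rw [← h] at this
    exact htprev this
  · -- xs = c (t-1) + 1 : column xs - 1 disagrees at time t-1, contradicting minimality
    have hXt : X (t-1) xs := hbetween (t-1) (by omega) (by omega)
    have := (D2 (t-1) htm).mpr (h ▸ hXt)
    exact hxmin (c (t-1)) (by omega) (t-1) (by omega) this


lemma wordProdA_cons (c : Fin n) (t : List (Fin n)) :
    wordProdA n (c :: t) = aGen n c * wordProdA n t := by
  simp [wordProdA]

section Reduced

variable {k : ℕ} {l : List (Fin n)}

lemma lenA_prefix (hred : ∀ l' : List (Fin n), wordProdA n l' = wordProdA n l →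
    l.length ≤ l'.length) {j : ℕ} (hj : j ≤ l.length) :
    lenA n (wordProdA n (l.take j)) = j := by
  apply le_antisymm
  · have := lenA_le_word (w := wordProdA n (l.take j)) (l := l.take j) rfl
    simpa [List.length_take, min_eq_left hj] using this
  · by_contra hlt
    push_neg at hlt
    have hne : {m | ∃ l' : List (Fin n), l'.length = m ∧
        wordProdA n l' = wordProdA n (l.take j)}.Nonempty :=
      ⟨(l.take j).length, l.take j, rfl, rfl⟩
    obtain ⟨l2, hl2len, hl2prod⟩ := Nat.sInf_mem hne
    have hprod : wordProdA n (l2 ++ l.drop j) = wordProdA n l := by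
      rw [wordProdA_append, hl2prod, ← wordProdA_append, List.take_append_drop]
    have := hred _ hprod
    rw [List.length_append, List.length_drop] at this
    have : l.length ≤ l2.length + (l.length - j) := this
    have hl2 : l2.length = lenA n (wordProdA n (l.take j)) := hl2len
    omega

lemma lenA_suffix (hred : ∀ l' : List (Fin n), wordProdA n l' = wordProdA n l →
    l.length ≤ l'.length) {j : ℕ} (hj : j ≤ l.length) :
    lenA n (wordProdA n (l.drop j)) = l.length - j := by
  apply le_antisymm
  · have := lenA_le_word (w := wordProdA n (l.drop j)) (l := l.drop j) rfl
    simpa [List.length_drop] using this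
  · by_contra hlt
    push_neg at hlt
    have hne : {m | ∃ l' : List (Fin n), l'.length = m ∧
        wordProdA n l' = wordProdA n (l.drop j)}.Nonempty :=
      ⟨(l.drop j).length, l.drop j, rfl, rfl⟩
    obtain ⟨l2, hl2len, hl2prod⟩ := Nat.sInf_mem hne
    have hprod : wordProdA n (l.take j ++ l2) = wordProdA n l := by
      rw [wordProdA_append, hl2prod, ← wordProdA_append, List.take_append_drop]
    have := hred _ hprod
    rw [List.length_append, List.length_take] at this
    have hl2 : l2.length = lenA n (wordProdA n (l.drop j)) := hl2len
    omega

/-- The key lemma: at each step of a reduced word of a minimal representative, the two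
crossing strands come from the two different blocks. -/
lemma key_lemma (hred : ∀ l' : List (Fin n), wordProdA n l' = wordProdA n l →
      l.length ≤ l'.length)
    (hmin : IsMinRepA n k (wordProdA n l)) {j : ℕ} (hj : j < l.length) :
    ((wordProdA n (l.take j)) (l[j]'hj).castSucc : ℕ) < k ∧
    ¬ (((wordProdA n (l.take j)) (l[j]'hj).succ : ℕ) < k) := by
  set m := l.length with hm
  set c : Fin n := l[j]'hj with hc
  set W : Equiv.Perm (Fin (n+1)) := wordProdA n (l.take j) with hW
  set V : Equiv.Perm (Fin (n+1)) := wordProdA n (l.drop (j+1)) with hV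
  have htake : wordProdA n (l.take (j+1)) = W * aGen n c := by
    rw [← List.take_concat_get' l j hj, wordProdA_concat]
  have hlenW : lenA n W = j := lenA_prefix hred (by omega)
  have hlenW1 : lenA n (W * aGen n c) = j + 1 := by
    rw [← htake]; exact lenA_prefix hred (by omega)
  -- step 1 : W c⁻ < W c⁺
  have hKEY1 : W c.castSucc < W c.succ := by
    rcases lt_or_gt_of_ne (aGen_values_ne (w := W) c) with h | h
    · exact h
    · exfalso
      have := invA_mul_aGen_of_gt h
      rw [lenA_eq_invA] at hlenW hlenW1
      omega
  -- decomposition μ = W * (aGen c * V)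
  have hdecomp : wordProdA n l = W * (aGen n c * V) := by
    conv_lhs => rw [← List.take_append_drop j l]
    rw [wordProdA_append, List.drop_eq_getElem_cons hj, wordProdA_cons]
  have hlenl : lenA n (wordProdA n l) = m := by
    have := lenA_prefix hred (le_refl m)
    rwa [List.take_length] at this
  have hlenV : lenA n V = m - (j+1) := lenA_suffix hred (by omega)
  have hlenCV : lenA n (aGen n c * V) = m - j := by
    apply le_antisymm
    · have : wordProdA n (c :: l.drop (j+1)) = aGen n c * V := by rw [wordProdA_cons]
      have h2 := lenA_le_word this
      simp only [List.length_cons, List.length_drop] at h2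
      omega
    · have h3 := lenA_mul_le W (aGen n c * V)
      rw [← hdecomp, hlenl, hlenW] at h3
      omega
  -- step 2 : V⁻¹ c⁻ < V⁻¹ c⁺
  have hKEY2 : V⁻¹ c.castSucc < V⁻¹ c.succ := by
    have hne : V⁻¹ c.castSucc ≠ V⁻¹ c.succ :=
      fun he => absurd (V⁻¹.injective he) (Fin.castSucc_lt_succ (i := c)).ne
    rcases lt_or_gt_of_ne hne with h | h
    · exact h
    · exfalso
      have := invA_aGen_mul_of_gt h
      rw [lenA_eq_invA] at hlenV hlenCV
      omega
  -- computing μ⁻¹ at the two values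
  have hinv1 : (wordProdA n l)⁻¹ (W c.castSucc) = V⁻¹ c.succ := by
    rw [hdecomp]
    simp only [mul_inv_rev, Equiv.Perm.mul_apply, perm_inv_apply_self, aGen_inv]
    rw [aGen_castSucc]
  have hinv2 : (wordProdA n l)⁻¹ (W c.succ) = V⁻¹ c.castSucc := by
    rw [hdecomp]
    simp only [mul_inv_rev, Equiv.Perm.mul_apply, perm_inv_apply_self, aGen_inv]
    rw [aGen_succ]
  -- conclusion via minimality
  by_contra hcon
  have hblock : ((W c.succ : Fin (n+1)) : ℕ) < k ∨ k ≤ ((W c.castSucc : Fin (n+1)) : ℕ) := by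
    by_contra hb
    push_neg at hb
    exact hcon ⟨by omega, by omega⟩
  have := minrep_block_mono hmin hKEY1 hblock
  rw [hinv1, hinv2] at this
  exact absurd hKEY2 (not_lt.mpr this.le)

end Reduced

section Walks

variable {k : ℕ}

lemma walk_facts (x : Equiv.Perm (Fin (n+1))) (p : List (Fin n × Equiv.Perm (Fin (n+1))))
    (hw : IsWalkA n k x p) : ∀ j, ∀ hj : j < p.length,
    GraphEdgeA n k ((x :: p.map Prod.snd).getD j 1) (p[j]'hj).1
      ((x :: p.map Prod.snd).getD (j+1) 1) := by
  induction p generalizing x with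
  | nil => intro j hj; simp at hj
  | cons hd tl ih =>
    obtain ⟨i, y⟩ := hd
    obtain ⟨hedge, hwalk⟩ := hw
    intro j hj
    cases j with
    | zero =>
      simpa [List.getD_cons_zero, List.getD_cons_succ] using hedge
    | succ j =>
      have := ih y hwalk j (by simpa using hj)
      simpa [List.getD_cons_succ] using this

lemma walkEnd_getD (x : Equiv.Perm (Fin (n+1))) (p : List (Fin n × Equiv.Perm (Fin (n+1)))) :
    walkEndA n x p = (x :: p.map Prod.snd).getD p.length 1 := by
  induction p generalizing x with
  | nil => simp [walkEndA, List.getD_cons_zero]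
  | cons hd tl ih =>
    obtain ⟨i, y⟩ := hd
    show walkEndA n y tl = _
    rw [ih y]
    simp [List.getD_cons_succ]

/-- Helper: membership through an explicit `Fin.mk`. -/
lemma fcol (lamb : Equiv.Perm (Fin (n+1))) (x : Fin (n+1)) :
    (∃ h : (x : ℕ) < n + 1, ((lamb ⟨(x : ℕ), h⟩ : Fin (n+1)) : ℕ) < k) ↔
      ((lamb x : Fin (n+1)) : ℕ) < k := by
  constructor
  · rintro ⟨h, hh⟩
    simpa [Fin.eta] using hh
  · intro h
    exact ⟨x.isLt, by simpa [Fin.eta] using h⟩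

end Walks


section Assembly

variable {k : ℕ} {l : List (Fin n)}

lemma fcolA (lamb : Equiv.Perm (Fin (n+1))) (c : Fin n) :
    (∃ h : (c : ℕ) < n + 1, ((lamb ⟨(c : ℕ), h⟩ : Fin (n+1)) : ℕ) < k) ↔
      ((lamb c.castSucc : Fin (n+1)) : ℕ) < k := by
  constructor
  · rintro ⟨h, hh⟩; exact hh
  · intro h; exact ⟨by omega, h⟩

lemma fcolB (lamb : Equiv.Perm (Fin (n+1))) (c : Fin n) :
    (∃ h : (c : ℕ) + 1 < n + 1, ((lamb ⟨(c : ℕ) + 1, h⟩ : Fin (n+1)) : ℕ) < k) ↔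
      ((lamb c.succ : Fin (n+1)) : ℕ) < k := by
  constructor
  · rintro ⟨h, hh⟩; exact hh
  · intro h; exact ⟨by omega, h⟩

lemma step_facts (p : List (Fin n × Equiv.Perm (Fin (n+1))))
    (hw : IsWalkA n k 1 p) (hlp : p.map Prod.fst = l) {j : ℕ} (hj : j < l.length) :
    GraphEdgeA n k (((1 : Equiv.Perm (Fin (n+1))) :: p.map Prod.snd).getD j 1) (l[j]'hj)
      (((1 : Equiv.Perm (Fin (n+1))) :: p.map Prod.snd).getD (j+1) 1) := by
  have hplen : p.length = l.length := by rw [← hlp, List.length_map]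
  have hjp : j < p.length := by omega
  have h2 := walk_facts 1 p hw j hjp
  have h3 : l[j]'hj = (p[j]'hjp).1 := by
    have : l[j]'hj = (p.map Prod.fst)[j]'(by rw [List.length_map]; omega) := by
      apply List.getElem_of_eq hlp.symm
    rw [this, List.getElem_map]
  rw [h3]
  exact h2

end Assembly

end PathUnique

open PathUnique

/-- In type `(Aₙ, A_{k-1} × A_{n-k})`, for a fixed reduced word `l` of a minimal coset
representative `μ ∈ ^PW` and any `λ ∈ ^PW`, there is at most one sequence
`λ₀ = ∅, λ₁, …, λ_m = λ` in `^PW` with `λ_{j-1}s_{i_j} ∈ ^PW` and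
`λ_j ∈ {λ_{j-1}, λ_{j-1}s_{i_j}}` for every `j`; i.e. `|Path(λ, T^μ)| ≤ 1`. -/
theorem path_of_given_weight_unique (n k : ℕ) (hk : k ≤ n + 1) (l : List (Fin n))
    (hred : ∀ l' : List (Fin n), wordProdA n l' = wordProdA n l → l.length ≤ l'.length)
    (hmin : IsMinRepA n k (wordProdA n l)) (lam : Equiv.Perm (Fin (n + 1))) :
    ({p : List (Fin n × Equiv.Perm (Fin (n + 1))) |
        IsWalkA n k 1 p ∧ p.map Prod.fst = l ∧ walkEndA n 1 p = lam} :
      Set (List (Fin n × Equiv.Perm (Fin (n + 1))))).Subsingleton := by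
  classical
  intro p hp q hq
  obtain ⟨hwp, hlp, hep⟩ := hp
  obtain ⟨hwq, hlq, heq2⟩ := hq
  have hplen : p.length = l.length := by rw [← hlp, List.length_map]
  have hqlen : q.length = l.length := by rw [← hlq, List.length_map]
  -- the chains of states
  set CP : ℕ → Equiv.Perm (Fin (n+1)) :=
    fun j => (((1 : Equiv.Perm (Fin (n+1))) :: p.map Prod.snd).getD j 1) with hCPdef
  set CQ : ℕ → Equiv.Perm (Fin (n+1)) :=
    fun j => (((1 : Equiv.Perm (Fin (n+1))) :: q.map Prod.snd).getD j 1) with hCQdef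
  have hedgeP : ∀ j (hj : j < l.length), GraphEdgeA n k (CP j) (l[j]'hj) (CP (j+1)) := by
    intro j hj
    simp only [hCPdef]
    exact step_facts p hwp hlp hj
  have hedgeQ : ∀ j (hj : j < l.length), GraphEdgeA n k (CQ j) (l[j]'hj) (CQ (j+1)) := by
    intro j hj
    simp only [hCQdef]
    exact step_facts q hwq hlq hj
  have hCP0 : CP 0 = 1 := rfl
  have hCQ0 : CQ 0 = 1 := rfl
  have hCPm : CP l.length = lam := by
    simp only [hCPdef]
    rw [← hplen, ← walkEnd_getD]
    exact hep
  have hCQm : CQ l.length = lam := by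
    simp only [hCQdef]
    rw [← hqlen, ← walkEnd_getD]
    exact heq2
  have hoptP : ∀ j (hj : j < l.length),
      CP (j+1) = CP j ∨ CP (j+1) = CP j * aGen n (l[j]'hj) :=
    fun j hj => (hedgeP j hj).2.2
  have hoptQ : ∀ j (hj : j < l.length),
      CQ (j+1) = CQ j ∨ CQ (j+1) = CQ j * aGen n (l[j]'hj) :=
    fun j hj => (hedgeQ j hj).2.2
  have hxorP : ∀ j (hj : j < l.length),
      ¬(((CP j (l[j]'hj).castSucc : Fin (n+1)) : ℕ) < k ↔
        ((CP j (l[j]'hj).succ : Fin (n+1)) : ℕ) < k) :=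
    fun j hj => exactly_one_token (hedgeP j hj).1 (hedgeP j hj).2.1
  have hxorQ : ∀ j (hj : j < l.length),
      ¬(((CQ j (l[j]'hj).castSucc : Fin (n+1)) : ℕ) < k ↔
        ((CQ j (l[j]'hj).succ : Fin (n+1)) : ℕ) < k) :=
    fun j hj => exactly_one_token (hedgeQ j hj).1 (hedgeQ j hj).2.1
  have hxorP' : ∀ j (hj : j < l.length),
      ¬(((CP (j+1) (l[j]'hj).castSucc : Fin (n+1)) : ℕ) < k ↔
        ((CP (j+1) (l[j]'hj).succ : Fin (n+1)) : ℕ) < k) := by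
    intro j hj
    rcases hoptP j hj with h | h
    · rw [h]; exact hxorP j hj
    · rw [h]
      simp only [Equiv.Perm.mul_apply, aGen_castSucc, aGen_succ]
      have := hxorP j hj
      tauto
  have hxorQ' : ∀ j (hj : j < l.length),
      ¬(((CQ (j+1) (l[j]'hj).castSucc : Fin (n+1)) : ℕ) < k ↔
        ((CQ (j+1) (l[j]'hj).succ : Fin (n+1)) : ℕ) < k) := by
    intro j hj
    rcases hoptQ j hj with h | h
    · rw [h]; exact hxorQ j hj
    · rw [h]
      simp only [Equiv.Perm.mul_apply, aGen_castSucc, aGen_succ]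
      have := hxorQ j hj
      tauto
  -- instantiate the abstract core lemma
  have hcore : ∀ j ≤ l.length, ∀ x : ℕ,
      ((∃ h : x < n + 1, ((CP j ⟨x, h⟩ : Fin (n+1)) : ℕ) < k) ↔
       (∃ h : x < n + 1, ((CQ j ⟨x, h⟩ : Fin (n+1)) : ℕ) < k)) := by
    apply core l.length k
      (fun j => if h : j < l.length then ((l[j]'h : Fin n) : ℕ) else 0)
      (fun j x => ∃ h : x < n + 1, ((CP j ⟨x, h⟩ : Fin (n+1)) : ℕ) < k)
      (fun j x => ∃ h : x < n + 1, ((CQ j ⟨x, h⟩ : Fin (n+1)) : ℕ) < k)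
      (fun j x => if h : x < n + 1 then
        ((wordProdA n (l.take j) ⟨x, h⟩ : Fin (n+1)) : ℕ) else 0)
    -- boundary at 0
    · intro x
      rw [hCP0, hCQ0]
    -- boundary at m
    · intro x
      rw [hCPm, hCQm]
    -- R1 for f
    · intro j hj x h1 h2
      rw [dif_pos hj] at h1 h2
      rcases Nat.lt_or_ge x (n+1) with hx | hx
      · have hc1 : (⟨x, hx⟩ : Fin (n+1)) ≠ (l[j]'hj).castSucc := by
          intro he
          exact h1 (by simpa using congrArg Fin.val he)
        have hc2 : (⟨x, hx⟩ : Fin (n+1)) ≠ (l[j]'hj).succ := by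
          intro he
          exact h2 (by simpa using congrArg Fin.val he)
        have hst : CP (j+1) ⟨x, hx⟩ = CP j ⟨x, hx⟩ := by
          rcases hoptP j hj with h | h
          · rw [h]
          · rw [h, Equiv.Perm.mul_apply, aGen_other hc1 hc2]
        constructor
        · rintro ⟨h, hh⟩
          exact ⟨hx, by rw [← hst]; exact hh⟩
        · rintro ⟨h, hh⟩
          exact ⟨hx, by rw [hst]; exact hh⟩
      · constructor
        · rintro ⟨h, _⟩; omega
        · rintro ⟨h, _⟩; omega
    -- R1 for g
    · intro j hj x h1 h2
      rw [dif_pos hj] at h1 h2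
      rcases Nat.lt_or_ge x (n+1) with hx | hx
      · have hc1 : (⟨x, hx⟩ : Fin (n+1)) ≠ (l[j]'hj).castSucc := by
          intro he
          exact h1 (by simpa using congrArg Fin.val he)
        have hc2 : (⟨x, hx⟩ : Fin (n+1)) ≠ (l[j]'hj).succ := by
          intro he
          exact h2 (by simpa using congrArg Fin.val he)
        have hst : CQ (j+1) ⟨x, hx⟩ = CQ j ⟨x, hx⟩ := by
          rcases hoptQ j hj with h | h
          · rw [h]
          · rw [h, Equiv.Perm.mul_apply, aGen_other hc1 hc2]
        constructor
        · rintro ⟨h, hh⟩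
          exact ⟨hx, by rw [← hst]; exact hh⟩
        · rintro ⟨h, hh⟩
          exact ⟨hx, by rw [hst]; exact hh⟩
      · constructor
        · rintro ⟨h, _⟩; omega
        · rintro ⟨h, _⟩; omega
    -- Xor for f at time j
    · intro j hj
      rw [dif_pos hj, fcolA (CP j) (l[j]'hj), fcolB (CP j) (l[j]'hj)]
      exact hxorP j hj
    -- Xor for g at time j
    · intro j hj
      rw [dif_pos hj, fcolA (CQ j) (l[j]'hj), fcolB (CQ j) (l[j]'hj)]
      exact hxorQ j hj
    -- Xor for f at time j+1
    · intro j hj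
      rw [dif_pos hj, fcolA (CP (j+1)) (l[j]'hj), fcolB (CP (j+1)) (l[j]'hj)]
      exact hxorP' j hj
    -- Xor for g at time j+1
    · intro j hj
      rw [dif_pos hj, fcolA (CQ (j+1)) (l[j]'hj), fcolB (CQ (j+1)) (l[j]'hj)]
      exact hxorQ' j hj
    -- KEY
    · intro j hj
      rw [dif_pos hj]
      have hkey := key_lemma (k := k) hred hmin hj
      have hx1 : ((l[j]'hj : Fin n) : ℕ) < n + 1 := by omega
      have hx2 : ((l[j]'hj : Fin n) : ℕ) + 1 < n + 1 := by
        have := (l[j]'hj).isLt; omega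
      rw [dif_pos hx1, dif_pos hx2]
      exact hkey
    -- W1
    · intro j hj x h1 h2
      rw [dif_pos hj] at h1 h2
      rcases Nat.lt_or_ge x (n+1) with hx | hx
      · rw [dif_pos hx, dif_pos hx]
        have hc1 : (⟨x, hx⟩ : Fin (n+1)) ≠ (l[j]'hj).castSucc := by
          intro he
          exact h1 (by simpa using congrArg Fin.val he)
        have hc2 : (⟨x, hx⟩ : Fin (n+1)) ≠ (l[j]'hj).succ := by
          intro he
          exact h2 (by simpa using congrArg Fin.val he)
        have htake : wordProdA n (l.take (j+1)) = wordProdA n (l.take j) * aGen n (l[j]'hj) := by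
          rw [← List.take_concat_get' l j hj, wordProdA_concat]
        rw [htake, Equiv.Perm.mul_apply, aGen_other hc1 hc2]
      · rw [dif_neg (by omega), dif_neg (by omega)]
    -- W2
    · intro j hj
      rw [dif_pos hj]
      have hx1 : ((l[j]'hj : Fin n) : ℕ) < n + 1 := by omega
      have hx2 : ((l[j]'hj : Fin n) : ℕ) + 1 < n + 1 := by
        have := (l[j]'hj).isLt; omega
      rw [dif_pos hx1, dif_pos hx2]
      have htake : wordProdA n (l.take (j+1)) = wordProdA n (l.take j) * aGen n (l[j]'hj) := by
        rw [← List.take_concat_get' l j hj, wordProdA_concat]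
      rw [htake]
      show ((wordProdA n (l.take j) (aGen n (l[j]'hj) (l[j]'hj).castSucc) : Fin (n+1)) : ℕ) = _
      rw [aGen_castSucc]
      rfl
  -- the chains agree
  have hstates : ∀ j, j ≤ l.length → CP j = CQ j := by
    intro j
    induction j with
    | zero => intro _; rw [hCP0, hCQ0]
    | succ j ih =>
      intro hj1
      have hj : j < l.length := by omega
      have hCeq := ih (by omega)
      rcases hoptP j hj with hp1 | hp1 <;> rcases hoptQ j hj with hq1 | hq1
      · rw [hp1, hq1, hCeq]
      · exfalso
        have hmem1 : (∃ h : ((l[j]'hj : Fin n) : ℕ) < n + 1,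
            ((CP (j+1) ⟨((l[j]'hj : Fin n) : ℕ), h⟩ : Fin (n+1)) : ℕ) < k) ↔
            (∃ h : ((l[j]'hj : Fin n) : ℕ) < n + 1,
            ((CQ (j+1) ⟨((l[j]'hj : Fin n) : ℕ), h⟩ : Fin (n+1)) : ℕ) < k) :=
          hcore (j+1) (by omega) _
        rw [fcolA (CP (j+1)) (l[j]'hj), fcolA (CQ (j+1)) (l[j]'hj)] at hmem1
        rw [hp1, hq1, ← hCeq, Equiv.Perm.mul_apply, aGen_castSucc] at hmem1
        exact hxorP j hj hmem1
      · exfalso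
        have hmem1 : (∃ h : ((l[j]'hj : Fin n) : ℕ) < n + 1,
            ((CP (j+1) ⟨((l[j]'hj : Fin n) : ℕ), h⟩ : Fin (n+1)) : ℕ) < k) ↔
            (∃ h : ((l[j]'hj : Fin n) : ℕ) < n + 1,
            ((CQ (j+1) ⟨((l[j]'hj : Fin n) : ℕ), h⟩ : Fin (n+1)) : ℕ) < k) :=
          hcore (j+1) (by omega) _
        rw [fcolA (CP (j+1)) (l[j]'hj), fcolA (CQ (j+1)) (l[j]'hj)] at hmem1
        rw [hp1, hq1, hCeq, Equiv.Perm.mul_apply, aGen_castSucc] at hmem1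
        exact hxorQ j hj hmem1.symm
      · rw [hp1, hq1, hCeq]
  -- conclude that the walks are equal
  apply List.ext_getElem (by omega)
  intro i h1 h2
  have hi : i < l.length := by omega
  have e1 : (p[i]'h1).1 = (q[i]'h2).1 := by
    have hp' : (p[i]'h1).1 = l[i]'hi := by
      have : l[i]'hi = (p.map Prod.fst)[i]'(by rw [List.length_map]; omega) := by
        apply List.getElem_of_eq hlp.symm
      rw [this, List.getElem_map]
    have hq' : (q[i]'h2).1 = l[i]'hi := by
      have : l[i]'hi = (q.map Prod.fst)[i]'(by rw [List.length_map]; omega) := by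
        apply List.getElem_of_eq hlq.symm
      rw [this, List.getElem_map]
    rw [hp', hq']
  have e2 : (p[i]'h1).2 = (q[i]'h2).2 := by
    have hp' : CP (i+1) = (p[i]'h1).2 := by
      simp only [hCPdef]
      rw [List.getD_cons_succ, List.getD_eq_getElem _ _ (by rw [List.length_map]; omega),
        List.getElem_map]
    have hq' : CQ (i+1) = (q[i]'h2).2 := by
      simp only [hCQdef]
      rw [List.getD_cons_succ, List.getD_eq_getElem _ _ (by rw [List.length_map]; omega),
        List.getElem_map]
    rw [← hp', ← hq', hstates (i+1) (by omega)]
  exact Prod.ext e1 e2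
end

section
/- Let (W,P) = (A_n, A_{k−1} × A_{n−k}) and fix reduced paths T^μ as above. If a path S from ∅ of weight T^μ ends at λ and has deg(S) = 0, then λ = μ (and S = T^μ). Equivalently, the light-leaves matrix satisfies Δ_{λ,μ}(q) = 1 if and only if λ = μ, so the factorization Δ = N·B is trivial with B the identity matrix. -/
open Pointwise

/-- The degree (Deodhar defect) of a path: a loop edge `λ → λ` labelled `i` contributes `+1`
if `ℓ(λsᵢ) = ℓ(λ)+1` and `-1` if `ℓ(λsᵢ) = ℓ(λ)-1`; non-loop edges contribute `0`. -/
noncomputable def walkDegA (n : ℕ) : Equiv.Perm (Fin (n + 1)) →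
    List (Fin n × Equiv.Perm (Fin (n + 1))) → ℤ
  | _, [] => 0
  | x, (i, y) :: p =>
    (if y = x then (if lenA n x < lenA n (x * aGen n i) then (1 : ℤ) else -1) else 0) +
      walkDegA n y p


namespace DZPaux

open Finset Equiv

variable {n k : ℕ}

/-- Number of inversions of a permutation of `Fin (n+1)`. -/
def invS (n : ℕ) (x : Equiv.Perm (Fin (n + 1))) : ℕ :=
  ((Finset.univ : Finset (Fin (n + 1) × Fin (n + 1))).filter
    (fun pq => pq.1 < pq.2 ∧ x pq.2 < x pq.1)).card

lemma aGen_castSucc (i : Fin n) : aGen n i i.castSucc = i.succ := Equiv.swap_apply_left _ _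
lemma aGen_succ (i : Fin n) : aGen n i i.succ = i.castSucc := Equiv.swap_apply_right _ _
lemma aGen_other {i : Fin n} {q : Fin (n+1)} (h1 : q ≠ i.castSucc) (h2 : q ≠ i.succ) :
    aGen n i q = q := Equiv.swap_apply_of_ne_of_ne h1 h2
lemma aGen_invol (i : Fin n) (q : Fin (n+1)) : aGen n i (aGen n i q) = q :=
  Equiv.swap_apply_self _ _ _

lemma aGen_lt {i : Fin n} {p q : Fin (n + 1)} (hpq : p < q)
    (hne : ¬(p = i.castSucc ∧ q = i.succ)) : aGen n i p < aGen n i q := by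
  have hab : (i.castSucc : ℕ) = (i : ℕ) := rfl
  have hab' : (i.succ : ℕ) = (i : ℕ) + 1 := rfl
  rcases eq_or_ne p i.castSucc with hp | hp
  · rcases eq_or_ne q i.succ with hq | hq
    · exact absurd ⟨hp, hq⟩ hne
    · have hq2 : q ≠ i.castSucc := by
        intro h; rw [hp, h] at hpq; exact lt_irrefl _ hpq
      rw [hp, aGen_castSucc, aGen_other hq2 hq]
      rw [Fin.lt_def] at hpq ⊢
      rw [hp, hab] at hpq
      have : (q : ℕ) ≠ (i : ℕ) + 1 := fun h => hq (Fin.ext (by rw [hab', h]))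
      omega
  · rcases eq_or_ne p i.succ with hp2 | hp2
    · have hq1 : q ≠ i.castSucc := by
        intro h; rw [hp2, h, Fin.lt_def, hab, hab'] at hpq; omega
      have hq2 : q ≠ i.succ := fun h => (hpq.ne (hp2.trans h.symm)).elim
      rw [hp2, aGen_succ, aGen_other hq1 hq2]
      rw [Fin.lt_def] at hpq ⊢
      rw [hp2, hab'] at hpq; rw [hab]; omega
    · rw [aGen_other hp hp2]
      rcases eq_or_ne q i.castSucc with hq | hq
      · rw [hq, aGen_castSucc, Fin.lt_def]
        rw [Fin.lt_def, hq, hab] at hpq; rw [hab']; omega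
      · rcases eq_or_ne q i.succ with hq2 | hq2
        · rw [hq2, aGen_succ, Fin.lt_def]
          rw [Fin.lt_def, hq2, hab'] at hpq
          have : (p : ℕ) ≠ (i : ℕ) := fun h => hp (Fin.ext (by rw [hab, h]))
          rw [hab]; omega
        · rw [aGen_other hq hq2]; exact hpq

lemma castSucc_lt_succ' (i : Fin n) : (i.castSucc : Fin (n+1)) < i.succ := Fin.castSucc_lt_succ

lemma aGen_mul_self (i : Fin n) : aGen n i * aGen n i = 1 := Equiv.swap_mul_self _ _

lemma aGen_ne_one (i : Fin n) : aGen n i ≠ 1 := by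
  rw [aGen, Ne, Equiv.swap_eq_one_iff]
  exact fun h => (castSucc_lt_succ' i).ne h

lemma mul_aGen_apply (x : Equiv.Perm (Fin (n+1))) (i : Fin n) (q : Fin (n+1)) :
    (x * aGen n i) q = x (aGen n i q) := rfl

lemma invS_mul_aGen_of_lt {x : Equiv.Perm (Fin (n + 1))} {i : Fin n}
    (h : x i.castSucc < x i.succ) : invS n (x * aGen n i) = invS n x + 1 := by
  classical
  set F : Finset (Fin (n+1) × Fin (n+1)) :=
    Finset.univ.filter (fun pq => pq.1 < pq.2 ∧ x pq.2 < x pq.1) with hF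
  set F' : Finset (Fin (n+1) × Fin (n+1)) :=
    Finset.univ.filter (fun pq => pq.1 < pq.2 ∧ (x * aGen n i) pq.2 < (x * aGen n i) pq.1) with hF'
  have hmemab : (i.castSucc, i.succ) ∈ F' := by
    simp only [hF', Finset.mem_filter, Finset.mem_univ, true_and]
    refine ⟨castSucc_lt_succ' i, ?_⟩
    rw [mul_aGen_apply, mul_aGen_apply, aGen_castSucc, aGen_succ]
    exact h
  have key : (F'.erase (i.castSucc, i.succ)).card = F.card := by
    apply Finset.card_bij (fun pq _ => (aGen n i pq.1, aGen n i pq.2))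
    · rintro ⟨p, q⟩ hpq
      rw [Finset.mem_erase] at hpq
      obtain ⟨hne, hmem⟩ := hpq
      simp only [hF', Finset.mem_filter, Finset.mem_univ, true_and] at hmem
      obtain ⟨h1, h2⟩ := hmem
      have hne' : ¬(p = i.castSucc ∧ q = i.succ) := by
        rintro ⟨rfl, rfl⟩; exact hne rfl
      simp only [hF, Finset.mem_filter, Finset.mem_univ, true_and]
      exact ⟨aGen_lt h1 hne', by simpa only [mul_aGen_apply] using h2⟩
    · rintro ⟨p₁, q₁⟩ h₁ ⟨p₂, q₂⟩ h₂ heq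
      simp only [Prod.mk.injEq] at heq
      obtain ⟨e1, e2⟩ := heq
      have hp : p₁ = p₂ := by
        have := congrArg (aGen n i) e1; rwa [aGen_invol, aGen_invol] at this
      have hq : q₁ = q₂ := by
        have := congrArg (aGen n i) e2; rwa [aGen_invol, aGen_invol] at this
      rw [hp, hq]
    · rintro ⟨p, q⟩ hpq
      simp only [hF, Finset.mem_filter, Finset.mem_univ, true_and] at hpq
      obtain ⟨h1, h2⟩ := hpq
      have hne' : ¬(p = i.castSucc ∧ q = i.succ) := by
        rintro ⟨rfl, rfl⟩
        exact absurd (h2.trans h) (lt_irrefl _)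
      refine ⟨(aGen n i p, aGen n i q), ?_, ?_⟩
      · rw [Finset.mem_erase]
        constructor
        · intro hcon
          simp only [Prod.mk.injEq] at hcon
          obtain ⟨e1, e2⟩ := hcon
          have hp : p = i.succ := by
            rw [← aGen_invol i p, e1, aGen_castSucc]
          have hq : q = i.castSucc := by
            rw [← aGen_invol i q, e2, aGen_succ]
          rw [hp, hq] at h1
          exact absurd (h1.trans (castSucc_lt_succ' i)) (lt_irrefl _)
        · simp only [hF', Finset.mem_filter, Finset.mem_univ, true_and]
          refine ⟨aGen_lt h1 hne', ?_⟩
          rw [mul_aGen_apply, mul_aGen_apply, aGen_invol, aGen_invol]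
          exact h2
      · rw [aGen_invol, aGen_invol]
  have hcard : F'.card = F.card + 1 := by
    rw [← key, Finset.card_erase_of_mem hmemab]
    have : 0 < F'.card := Finset.card_pos.mpr ⟨_, hmemab⟩
    omega
  simpa only [invS, ← hF, ← hF'] using hcard

lemma invS_mul_aGen_of_gt {x : Equiv.Perm (Fin (n + 1))} {i : Fin n}
    (h : x i.succ < x i.castSucc) : invS n x = invS n (x * aGen n i) + 1 := by
  have h' : (x * aGen n i) i.castSucc < (x * aGen n i) i.succ := by
    rw [mul_aGen_apply, mul_aGen_apply, aGen_castSucc, aGen_succ]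
    exact h
  have := invS_mul_aGen_of_lt h'
  rwa [mul_assoc, aGen_mul_self, mul_one] at this

end DZPaux

namespace DZPaux

variable {n k : ℕ}

lemma invS_one : invS n (1 : Equiv.Perm (Fin (n+1))) = 0 := by
  rw [invS, Finset.card_eq_zero, Finset.filter_eq_empty_iff]
  rintro ⟨p, q⟩ _
  simp only [Equiv.Perm.one_apply, not_and]
  intro h1
  exact not_lt.mpr h1.le

lemma eq_one_of_no_descent {x : Equiv.Perm (Fin (n+1))}
    (h : ∀ i : Fin n, x i.castSucc < x i.succ) : x = 1 := by
  have hmono : StrictMono x := Fin.strictMono_iff_lt_succ.mpr h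
  have hsymm : StrictMono (x.symm : Fin (n+1) → Fin (n+1)) := by
    intro u v huv
    rcases lt_trichotomy (x.symm u) (x.symm v) with h' | h' | h'
    · exact h'
    · exact absurd (congrArg x h') (by simp [huv.ne])
    · have := hmono h'
      simp only [Equiv.apply_symm_apply] at this
      exact absurd (this.trans huv) (lt_irrefl _)
  haveI : WellFoundedLT (Fin (n+1)) := inferInstance
  have h1 : ∀ q : Fin (n+1), q ≤ x q := fun q => hmono.le_apply
  have h2 : ∀ q : Fin (n+1), q ≤ x.symm q := fun q => hsymm.le_apply
  ext q
  have := h2 (x q)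
  simp only [Equiv.symm_apply_apply] at this
  exact le_antisymm (by exact_mod_cast this) (by exact_mod_cast h1 q)

lemma exists_descent {x : Equiv.Perm (Fin (n+1))} (hx : x ≠ 1) :
    ∃ i : Fin n, x i.succ < x i.castSucc := by
  by_contra hcon
  push_neg at hcon
  apply hx
  apply eq_one_of_no_descent
  intro i
  have hne : x i.castSucc ≠ x i.succ := fun h =>
    (castSucc_lt_succ' i).ne (x.injective h)
  exact lt_of_le_of_ne (hcon i) hne

lemma wordProdA_append (l l' : List (Fin n)) :
    wordProdA n (l ++ l') = wordProdA n l * wordProdA n l' := by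
  simp [wordProdA, List.map_append, List.prod_append]

lemma wordProdA_nil : wordProdA n ([] : List (Fin n)) = 1 := rfl

lemma wordProdA_singleton (i : Fin n) : wordProdA n [i] = aGen n i := by
  simp [wordProdA]

lemma exists_word_of_invS : ∀ (m : ℕ) (x : Equiv.Perm (Fin (n+1))), invS n x = m →
    ∃ l : List (Fin n), wordProdA n l = x ∧ l.length = m := by
  intro m
  induction m using Nat.strong_induction_on with
  | _ m IH =>
    intro x hx
    rcases eq_or_ne x 1 with rfl | hne
    · exact ⟨[], rfl, by simp [← hx, invS_one]⟩
    · obtain ⟨i, hi⟩ := exists_descent hne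
      have hlt := invS_mul_aGen_of_gt hi
      have hm : invS n (x * aGen n i) < m := by omega
      obtain ⟨l, hl, hlen⟩ := IH _ hm (x * aGen n i) rfl
      refine ⟨l ++ [i], ?_, ?_⟩
      · rw [wordProdA_append, hl, wordProdA_singleton, mul_assoc, aGen_mul_self, mul_one]
      · simp only [List.length_append, List.length_singleton, hlen]
        omega

lemma invS_wordProd_le (l : List (Fin n)) : invS n (wordProdA n l) ≤ l.length := by
  induction l using List.reverseRecOn with
  | nil => rw [wordProdA_nil, invS_one]; exact Nat.zero_le _
  | append_singleton l i IH =>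
    rw [wordProdA_append, wordProdA_singleton, List.length_append, List.length_singleton]
    set y := wordProdA n l
    have hne : y i.castSucc ≠ y i.succ := fun h =>
      (castSucc_lt_succ' i).ne (y.injective h)
    rcases lt_or_gt_of_ne hne with h | h
    · rw [invS_mul_aGen_of_lt h]; omega
    · have := invS_mul_aGen_of_gt h; omega

lemma lenA_eq_invS (x : Equiv.Perm (Fin (n+1))) : lenA n x = invS n x := by
  obtain ⟨l, hl, hlen⟩ := exists_word_of_invS (invS n x) x rfl
  apply le_antisymm
  · exact Nat.sInf_le ⟨l, hlen, hl⟩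
  · have hne : {m | ∃ l : List (Fin n), l.length = m ∧ wordProdA n l = x}.Nonempty :=
      ⟨invS n x, l, hlen, hl⟩
    obtain ⟨l', hlen', hl'⟩ := Nat.sInf_mem hne
    rw [lenA, ← hlen', ← hl']
    exact invS_wordProd_le l'

lemma lenA_lt_of_lt {x : Equiv.Perm (Fin (n+1))} {i : Fin n}
    (h : x i.castSucc < x i.succ) : lenA n x < lenA n (x * aGen n i) := by
  rw [lenA_eq_invS, lenA_eq_invS, invS_mul_aGen_of_lt h]; omega

lemma lenA_gt_of_gt {x : Equiv.Perm (Fin (n+1))} {i : Fin n}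
    (h : x i.succ < x i.castSucc) : ¬ lenA n x < lenA n (x * aGen n i) := by
  rw [lenA_eq_invS, lenA_eq_invS]
  have := invS_mul_aGen_of_gt h
  omega

lemma invS_inv (x : Equiv.Perm (Fin (n+1))) : invS n x⁻¹ = invS n x := by
  classical
  rw [invS, invS]
  apply Finset.card_bij (fun pq _ => ((x⁻¹ pq.2 : Fin (n+1)), x⁻¹ pq.1))
  · rintro ⟨p, q⟩ hpq
    simp only [Finset.mem_filter, Finset.mem_univ, true_and] at hpq ⊢
    obtain ⟨h1, h2⟩ := hpq
    refine ⟨h2, ?_⟩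
    simpa using h1
  · rintro ⟨p₁, q₁⟩ _ ⟨p₂, q₂⟩ _ heq
    simp only [Prod.mk.injEq] at heq
    obtain ⟨e1, e2⟩ := heq
    rw [Prod.mk.injEq]
    exact ⟨x⁻¹.injective e2, x⁻¹.injective e1⟩
  · rintro ⟨p, q⟩ hpq
    simp only [Finset.mem_filter, Finset.mem_univ, true_and] at hpq
    obtain ⟨h1, h2⟩ := hpq
    refine ⟨(x q, x p), ?_, ?_⟩
    · simp only [Finset.mem_filter, Finset.mem_univ, true_and]
      refine ⟨h2, ?_⟩
      simpa using h1
    · simp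

end DZPaux

namespace DZPaux

variable {n k : ℕ}

/-- `x` is increasing within each of the value-blocks `{<k}` and `{≥k}`. -/
def SortedP (n k : ℕ) (x : Equiv.Perm (Fin (n+1))) : Prop :=
  ∀ p q : Fin (n+1), p < q → (((x p : ℕ) < k) ↔ ((x q : ℕ) < k)) → x p < x q

lemma mem_young_iff {u : Equiv.Perm (Fin (n+1))} :
    u ∈ youngSubgroup n k ↔ ∀ v : Fin (n+1), ((u v : ℕ) < k ↔ (v : ℕ) < k) := by
  rw [youngSubgroup, MulAction.mem_stabilizer_iff]
  constructor
  · intro h v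
    have h1 := Set.ext_iff.mp h (u v)
    rw [Set.mem_smul_set_iff_inv_smul_mem] at h1
    have h2 : (u⁻¹ • (u v) : Fin (n+1)) = v := by
      simp [Equiv.Perm.smul_def]
    rw [h2] at h1
    simp only [Set.mem_setOf_eq] at h1
    exact h1.symm
  · intro h
    ext w
    rw [Set.mem_smul_set_iff_inv_smul_mem]
    have h1 := h (u⁻¹ w)
    have h2 : u (u⁻¹ w) = w := by simp
    rw [h2] at h1
    have h3 : (u⁻¹ • w : Fin (n+1)) = u⁻¹ w := rfl
    rw [h3]
    simp only [Set.mem_setOf_eq]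
    exact h1.symm

/-- Number of "cross-block" inversions. -/
def crossInv (n k : ℕ) (x : Equiv.Perm (Fin (n+1))) : ℕ :=
  ((Finset.univ : Finset (Fin (n + 1) × Fin (n + 1))).filter
    (fun pq => pq.1 < pq.2 ∧ x pq.2 < x pq.1 ∧
      ¬(((x pq.1 : ℕ) < k) ↔ ((x pq.2 : ℕ) < k)))).card

lemma crossInv_le_invS (x : Equiv.Perm (Fin (n+1))) : crossInv n k x ≤ invS n x := by
  apply Finset.card_le_card
  intro pq hpq
  simp only [Finset.mem_filter, Finset.mem_univ, true_and] at hpq ⊢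
  exact ⟨hpq.1, hpq.2.1⟩

lemma invS_eq_crossInv_of_sorted {x : Equiv.Perm (Fin (n+1))} (hx : SortedP n k x) :
    invS n x = crossInv n k x := by
  rw [invS, crossInv]
  congr 1
  apply Finset.filter_congr
  rintro ⟨p, q⟩ _
  simp only
  constructor
  · rintro ⟨h1, h2⟩
    refine ⟨h1, h2, fun hsame => ?_⟩
    exact absurd (hx p q h1 hsame) (not_lt.mpr h2.le)
  · rintro ⟨h1, h2, _⟩
    exact ⟨h1, h2⟩

lemma lt_iff_block {v w : Fin (n+1)} (hne : ¬(((v : ℕ) < k) ↔ ((w : ℕ) < k))) :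
    w < v ↔ ((w : ℕ) < k ∧ ¬((v : ℕ) < k)) := by
  rw [Fin.lt_def]
  omega

lemma crossInv_mul_young {u x : Equiv.Perm (Fin (n+1))} (hu : u ∈ youngSubgroup n k) :
    crossInv n k (u * x) = crossInv n k x := by
  rw [crossInv, crossInv]
  congr 1
  apply Finset.filter_congr
  rintro ⟨p, q⟩ _
  have hb := mem_young_iff.mp hu
  simp only [Equiv.Perm.mul_apply]
  have e1 : (((u (x p)) : ℕ) < k) ↔ ((x p : ℕ) < k) := hb (x p)
  have e2 : (((u (x q)) : ℕ) < k) ↔ ((x q : ℕ) < k) := hb (x q)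
  constructor
  · rintro ⟨h1, h2, h3⟩
    have h3' : ¬(((x p : ℕ) < k) ↔ ((x q : ℕ) < k)) := by
      intro hc; exact h3 (e1.trans (hc.trans e2.symm))
    refine ⟨h1, ?_, h3'⟩
    rw [lt_iff_block h3']
    rw [lt_iff_block (fun hc => h3' (e1.symm.trans (hc.trans e2)))] at h2
    omega
  · rintro ⟨h1, h2, h3⟩
    have h3' : ¬(((u (x p) : ℕ) < k) ↔ ((u (x q) : ℕ) < k)) := by
      intro hc; exact h3 (e1.symm.trans (hc.trans e2))
    refine ⟨h1, ?_, h3'⟩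
    rw [lt_iff_block h3']
    rw [lt_iff_block h3] at h2
    omega

lemma isMinRep_of_sorted {x : Equiv.Perm (Fin (n+1))} (hx : SortedP n k x) :
    IsMinRepA n k x := by
  intro u hu
  rw [lenA_eq_invS, lenA_eq_invS, invS_eq_crossInv_of_sorted hx, ← crossInv_mul_young hu]
  exact crossInv_le_invS _

end DZPaux

namespace DZPaux

variable {n k : ℕ}

/-- From any within-block inversion extract one with adjacent values. -/
lemma exists_adjacent_inversion {x : Equiv.Perm (Fin (n+1))} :
    ∀ (g : ℕ) (p q : Fin (n+1)), p < q → (((x p : ℕ) < k) ↔ ((x q : ℕ) < k)) →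
      x q < x p → ((x p : ℕ) - (x q : ℕ) ≤ g) →
      ∃ p' q' : Fin (n+1), p' < q' ∧ (((x p' : ℕ) < k) ↔ ((x q' : ℕ) < k)) ∧
        (x p' : ℕ) = (x q' : ℕ) + 1 := by
  intro g
  induction g with
  | zero =>
    intro p q hpq _ hlt hle
    rw [Fin.lt_def] at hlt
    omega
  | succ g IH =>
    intro p q hpq hsame hlt hle
    rcases eq_or_ne ((x p : ℕ)) ((x q : ℕ) + 1) with hadj | hadj
    · exact ⟨p, q, hpq, hsame, hadj⟩
    · have hlt' : (x q : ℕ) < (x p : ℕ) := Fin.lt_def.mp hlt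
      have hcb : ((x q : ℕ) + 1) < n + 1 := by
        have := (x p).isLt
        omega
      set c : Fin (n+1) := ⟨(x q : ℕ) + 1, hcb⟩ with hc
      set r := x⁻¹ c with hr
      have hxr : x r = c := by simp [hr]
      have hsame_cq : ((c : ℕ) < k) ↔ ((x q : ℕ) < k) := by
        simp only [hc]
        rw [Fin.lt_def] at hlt
        constructor
        · intro h; omega
        · intro h
          by_contra hcon
          have hpk : ¬ ((x p : ℕ) < k) := by omega
          exact hpk (hsame.mpr h)
      have hsame_pc : (((x p : ℕ)) < k) ↔ ((c : ℕ) < k) := by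
        rw [hsame_cq]; exact hsame
      have hrq : r ≠ q := by
        intro hcon
        rw [hcon] at hxr
        have : (x q : ℕ) = (c : ℕ) := congrArg _ hxr
        simp [hc] at this
      have hrp : r ≠ p := by
        intro hcon
        rw [hcon] at hxr
        have : (x p : ℕ) = (c : ℕ) := congrArg _ hxr
        simp [hc] at this
        exact hadj this
      rcases lt_or_gt_of_ne hrq with h | h
      · refine ⟨r, q, h, ?_, ?_⟩
        · rw [hxr]; exact hsame_cq
        · rw [hxr]
      · have hpr : p < r := hpq.trans h
        apply IH p r hpr
        · rw [hxr]; exact hsame_pc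
        · rw [hxr, Fin.lt_def]
          simp only [hc]
          omega
        · rw [hxr]
          simp only [hc]
          omega

lemma sorted_of_isMinRep {x : Equiv.Perm (Fin (n+1))} (hx : IsMinRepA n k x) :
    SortedP n k x := by
  by_contra hcon
  rw [SortedP] at hcon
  push_neg at hcon
  obtain ⟨p, q, hpq, hsame, hge⟩ := hcon
  have hne : x p ≠ x q := fun h => hpq.ne (x.injective h)
  have hlt : x q < x p := lt_of_le_of_ne hge hne.symm
  obtain ⟨p', q', hpq', hsame', hadj⟩ :=
    exists_adjacent_inversion ((x p : ℕ) - (x q : ℕ)) p q hpq hsame hlt le_rfl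
  -- j : Fin n with j.castSucc = x q', j.succ = x p'
  have hvn : ((x q' : ℕ)) < n := by
    have := (x p').isLt
    omega
  set j : Fin n := ⟨(x q' : ℕ), hvn⟩ with hj
  have hjc : (j.castSucc : Fin (n+1)) = x q' := Fin.ext rfl
  have hjs : (j.succ : Fin (n+1)) = x p' := Fin.ext (by simp [hj, hadj.symm])
  have humem : aGen n j ∈ youngSubgroup n k := by
    rw [mem_young_iff]
    intro v
    rcases eq_or_ne v j.castSucc with rfl | h1
    · rw [aGen_castSucc, hjs, hjc]
      exact hsame'
    · rcases eq_or_ne v j.succ with rfl | h2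
      · rw [aGen_succ, hjc, hjs]
        exact hsame'.symm
      · rw [aGen_other h1 h2]
  have hlen : lenA n (aGen n j * x) < lenA n x := by
    rw [lenA_eq_invS, lenA_eq_invS]
    have einv : (x⁻¹ * aGen n j)⁻¹ = aGen n j * x := by
      rw [mul_inv_rev, inv_inv, aGen, Equiv.swap_inv]
    have e1 : invS n (aGen n j * x) = invS n (x⁻¹ * aGen n j) := by
      rw [← invS_inv (x⁻¹ * aGen n j), einv]
    rw [e1, ← invS_inv x]
    have hgt : (x⁻¹ : Equiv.Perm (Fin (n+1))) j.succ < x⁻¹ j.castSucc := by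
      rw [hjc, hjs]
      simp only [show ∀ z, x⁻¹ (x z) = z from fun z => x.symm_apply_apply z]
      exact hpq'
    have := invS_mul_aGen_of_gt hgt
    omega
  exact absurd (hx (aGen n j) humem) (not_le.mpr hlen)

end DZPaux

namespace DZPaux

variable {n k : ℕ}

lemma sortedP_one : SortedP n k (1 : Equiv.Perm (Fin (n+1))) := by
  intro p q hpq _
  simpa using hpq

/-- A sorted representative is determined by its bit-set. -/
lemma sorted_unique {x y : Equiv.Perm (Fin (n+1))} (hx : SortedP n k x) (hy : SortedP n k y)
    (hA : ∀ q : Fin (n+1), ((x q : ℕ) < k ↔ (y q : ℕ) < k)) : x = y := by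
  have key : ∀ v w : Fin (n+1), v < w → (y * x⁻¹) v < (y * x⁻¹) w := by
    intro v w hvw
    by_cases hsame : ((v : ℕ) < k) ↔ ((w : ℕ) < k)
    · -- same block: use sortedness of x then y
      have hxv : x (x⁻¹ v) = v := x.apply_symm_apply v
      have hxw : x (x⁻¹ w) = w := x.apply_symm_apply w
      have hpq : x⁻¹ v < x⁻¹ w := by
        rcases lt_trichotomy (x⁻¹ v) (x⁻¹ w) with h | h | h
        · exact h
        · exact absurd (congrArg x h) (by rw [hxv, hxw]; exact fun hc => hvw.ne hc)
        · have := hx _ _ h (by rw [hxv, hxw]; exact hsame.symm)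
          rw [hxv, hxw] at this
          exact absurd (this.trans hvw) (lt_irrefl _)
      have hsame_y : ((y (x⁻¹ v) : ℕ) < k) ↔ ((y (x⁻¹ w) : ℕ) < k) := by
        rw [← hA (x⁻¹ v), ← hA (x⁻¹ w), hxv, hxw]
        exact hsame
      have := hy _ _ hpq hsame_y
      simpa [Equiv.Perm.mul_apply] using this
    · -- different blocks
      have hblocks : ((v : ℕ) < k) ∧ ¬((w : ℕ) < k) := by
        rw [Fin.lt_def] at hvw
        omega
      have hbv : ((y (x⁻¹ v) : ℕ) < k) := by
        rw [← hA (x⁻¹ v), show ∀ z, x (x⁻¹ z) = z from fun z => x.apply_symm_apply z]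
        exact hblocks.1
      have hbw : ¬ ((y (x⁻¹ w) : ℕ) < k) := by
        intro hcon
        rw [← hA (x⁻¹ w), show ∀ z, x (x⁻¹ z) = z from fun z => x.apply_symm_apply z] at hcon
        exact hblocks.2 hcon
      simp only [Equiv.Perm.mul_apply]
      rw [Fin.lt_def]
      omega
  have h1 : (y * x⁻¹ : Equiv.Perm (Fin (n+1))) = 1 := by
    apply eq_one_of_no_descent
    intro i
    exact key _ _ (castSucc_lt_succ' i)
  have h2 := congrArg (· * x) h1
  simp only [mul_assoc, inv_mul_cancel, mul_one, one_mul] at h2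
  exact h2.symm

end DZPaux

namespace DZPaux

variable {n k : ℕ}

/-- If `x` and `x·sᵢ` are both sorted, the bits at positions `i, i+1` differ. -/
lemma pattern_dichotomy {x : Equiv.Perm (Fin (n+1))} {i : Fin n}
    (hx : SortedP n k x) (hxs : SortedP n k (x * aGen n i)) :
    ¬(((x i.castSucc : ℕ) < k) ↔ ((x i.succ : ℕ) < k)) := by
  intro hsame
  have h1 : x i.castSucc < x i.succ := hx _ _ (castSucc_lt_succ' i) hsame
  have h2 := hxs i.castSucc i.succ (castSucc_lt_succ' i)
  rw [mul_aGen_apply, mul_aGen_apply, aGen_castSucc, aGen_succ] at h2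
  have := h2 hsame.symm
  exact absurd (h1.trans this) (lt_irrefl _)

lemma sortedP_mul_aGen {x : Equiv.Perm (Fin (n+1))} {i : Fin n}
    (hx : SortedP n k x)
    (hdi : ¬(((x i.castSucc : ℕ) < k) ↔ ((x i.succ : ℕ) < k))) :
    SortedP n k (x * aGen n i) := by
  intro p q hpq hsame
  rw [mul_aGen_apply, mul_aGen_apply] at hsame ⊢
  have hne : ¬(p = i.castSucc ∧ q = i.succ) := by
    rintro ⟨rfl, rfl⟩
    rw [aGen_castSucc, aGen_succ] at hsame
    exact hdi hsame.symm
  exact hx _ _ (aGen_lt hpq hne) hsame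

/-- Sum of positions whose value is in the lower block. -/
def sumA (n k : ℕ) (x : Equiv.Perm (Fin (n+1))) : ℕ :=
  ∑ q ∈ Finset.univ.filter (fun q : Fin (n+1) => (x q : ℕ) < k), (q : ℕ)

/-- Number of positions in lower block for `y` but not for `x`. -/
def dCard (n k : ℕ) (y x : Equiv.Perm (Fin (n+1))) : ℕ :=
  (Finset.univ.filter (fun q : Fin (n+1) => ((y q : ℕ) < k) ∧ ¬((x q : ℕ) < k))).card

lemma filter_mul_aGen (x : Equiv.Perm (Fin (n+1))) (i : Fin n)
    (P : Fin (n+1) → Prop) [DecidablePred P] :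
    Finset.univ.filter (fun q => P ((x * aGen n i) q)) =
      (Finset.univ.filter (fun q => P (x q))).image (aGen n i) := by
  ext q
  simp only [Finset.mem_filter, Finset.mem_univ, true_and, Finset.mem_image]
  constructor
  · intro h
    exact ⟨aGen n i q, by rwa [mul_aGen_apply] at h, aGen_invol i q⟩
  · rintro ⟨r, hr, rfl⟩
    rwa [mul_aGen_apply, aGen_invol]

lemma sumA_mul_aGen_up {x : Equiv.Perm (Fin (n+1))} {i : Fin n}
    (ha : (x i.castSucc : ℕ) < k) (hb : ¬((x i.succ : ℕ) < k)) :
    sumA n k (x * aGen n i) = sumA n k x + 1 := by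
  classical
  rw [sumA, sumA, filter_mul_aGen x i (fun v : Fin (n+1) => (v : ℕ) < k)]
  rw [Finset.sum_image (fun r _ s _ h => (aGen n i).injective h)]
  set F := Finset.univ.filter (fun q : Fin (n+1) => (x q : ℕ) < k) with hF
  have haF : i.castSucc ∈ F := by simp [hF, ha]
  have hbF : i.succ ∉ F := by simp [hF, hb]
  have e1 : ((aGen n i i.castSucc : Fin (n+1)) : ℕ) + ∑ q ∈ F.erase i.castSucc, ((aGen n i q : Fin (n+1)) : ℕ)
      = ∑ q ∈ F, ((aGen n i q : Fin (n+1)) : ℕ) :=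
    Finset.add_sum_erase F (fun q => ((aGen n i q : Fin (n+1)) : ℕ)) haF
  have e2 : ((i.castSucc : Fin (n+1)) : ℕ) + ∑ q ∈ F.erase i.castSucc, (q : ℕ)
      = ∑ q ∈ F, (q : ℕ) := Finset.add_sum_erase F (fun q : Fin (n+1) => (q : ℕ)) haF
  have e3 : ∑ q ∈ F.erase i.castSucc, ((aGen n i q : Fin (n+1)) : ℕ)
      = ∑ q ∈ F.erase i.castSucc, (q : ℕ) := by
    apply Finset.sum_congr rfl
    intro q hq
    rw [Finset.mem_erase] at hq
    have hq2 : q ≠ i.succ := by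
      intro hcon
      rw [hcon] at hq
      exact hbF hq.2
    rw [aGen_other hq.1 hq2]
  rw [aGen_castSucc] at e1
  have hsv : ((i.succ : Fin (n+1)) : ℕ) = (i : ℕ) + 1 := rfl
  have hcv : ((i.castSucc : Fin (n+1)) : ℕ) = (i : ℕ) := rfl
  omega

lemma sumA_mul_aGen_down {x : Equiv.Perm (Fin (n+1))} {i : Fin n}
    (ha : ¬((x i.castSucc : ℕ) < k)) (hb : (x i.succ : ℕ) < k) :
    sumA n k x = sumA n k (x * aGen n i) + 1 := by
  have ha' : ((x * aGen n i) i.castSucc : ℕ) < k := by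
    rw [mul_aGen_apply, aGen_castSucc]; exact hb
  have hb' : ¬ (((x * aGen n i) i.succ : ℕ) < k) := by
    rw [mul_aGen_apply, aGen_succ]; exact ha
  have := sumA_mul_aGen_up ha' hb'
  rw [mul_assoc, aGen_mul_self, mul_one] at this
  omega

lemma dCard_mul_aGen_both (y x : Equiv.Perm (Fin (n+1))) (i : Fin n) :
    dCard n k (y * aGen n i) (x * aGen n i) = dCard n k y x := by
  classical
  rw [dCard, dCard]
  have : Finset.univ.filter
      (fun q : Fin (n+1) => (((y * aGen n i) q : ℕ) < k) ∧ ¬(((x * aGen n i) q : ℕ) < k)) =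
      (Finset.univ.filter (fun q : Fin (n+1) => ((y q : ℕ) < k) ∧ ¬((x q : ℕ) < k))).image
        (aGen n i) := by
    ext q
    simp only [Finset.mem_filter, Finset.mem_univ, true_and, Finset.mem_image]
    constructor
    · intro h
      rw [mul_aGen_apply, mul_aGen_apply] at h
      exact ⟨aGen n i q, h, aGen_invol i q⟩
    · rintro ⟨r, hr, rfl⟩
      rw [mul_aGen_apply, mul_aGen_apply, aGen_invol]
      exact hr
  rw [this, Finset.card_image_of_injective _ (aGen n i).injective]

/-- The key exchange identity for `dCard` along an up-step of the reference walk. -/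
lemma dCard_exchange {x : Equiv.Perm (Fin (n+1))} {i : Fin n} (y : Equiv.Perm (Fin (n+1)))
    (ha : (x i.castSucc : ℕ) < k) (hb : ¬((x i.succ : ℕ) < k)) :
    dCard n k y (x * aGen n i) + (if (y i.succ : ℕ) < k then 1 else 0)
      = dCard n k y x + (if (y i.castSucc : ℕ) < k then 1 else 0) := by
  classical
  rw [dCard, dCard, Finset.card_filter, Finset.card_filter]
  have hne : (i.succ : Fin (n+1)) ∈ Finset.univ.erase i.castSucc := by
    rw [Finset.mem_erase]
    exact ⟨(castSucc_lt_succ' i).ne', Finset.mem_univ _⟩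
  have split : ∀ f : Fin (n+1) → ℕ, ∑ q : Fin (n+1), f q
      = f i.castSucc + (f i.succ + ∑ q ∈ (Finset.univ.erase i.castSucc).erase i.succ, f q) := by
    intro f
    rw [Finset.add_sum_erase _ f hne, Finset.add_sum_erase _ f (Finset.mem_univ i.castSucc)]
  rw [split, split]
  have hrest : ∑ q ∈ (Finset.univ.erase i.castSucc).erase i.succ,
        (if (((y q : ℕ) < k) ∧ ¬(((x * aGen n i) q : ℕ) < k)) then 1 else 0)
      = ∑ q ∈ (Finset.univ.erase i.castSucc).erase i.succ,
        (if (((y q : ℕ) < k) ∧ ¬((x q : ℕ) < k)) then 1 else 0) := by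
    apply Finset.sum_congr rfl
    intro q hq
    rw [Finset.mem_erase, Finset.mem_erase] at hq
    rw [mul_aGen_apply, aGen_other hq.2.1 hq.1]
  rw [hrest]
  have hxa : ¬ (((x * aGen n i) i.castSucc : ℕ) < k) := by
    rw [mul_aGen_apply, aGen_castSucc]; exact hb
  have hxb : (((x * aGen n i) i.succ : ℕ) < k) := by
    rw [mul_aGen_apply, aGen_succ]; exact ha
  simp only [hxa, hxb, ha, hb, not_true, not_false_iff, and_true, and_false, if_false]
  by_cases h1 : ((y i.castSucc : ℕ) < k) <;> by_cases h2 : ((y i.succ : ℕ) < k) <;>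
    simp [h1, h2] <;> omega

end DZPaux

namespace DZPaux

variable {n k : ℕ}

lemma isMinRepA_one : IsMinRepA n k (1 : Equiv.Perm (Fin (n+1))) := by
  intro u hu
  rw [lenA_eq_invS, invS_one]
  exact Nat.zero_le _

/-- A walk all of whose steps move up (pattern `10`, non-loop). -/
def UpWalkP (n k : ℕ) : Equiv.Perm (Fin (n + 1)) →
    List (Fin n × Equiv.Perm (Fin (n + 1))) → Prop
  | _, [] => True
  | x, (i, y) :: p =>
      ((x i.castSucc : ℕ) < k) ∧ ¬((x i.succ : ℕ) < k) ∧ y = x * aGen n i ∧ UpWalkP n k y p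

lemma walk_end_minRep : ∀ (W : List (Fin n × Equiv.Perm (Fin (n + 1))))
    (x : Equiv.Perm (Fin (n+1))), IsWalkA n k x W → IsMinRepA n k x →
    IsMinRepA n k (walkEndA n x W)
  | [], x, _, hx => hx
  | (i, y) :: W, x, hW, _ => by
    obtain ⟨⟨h1, h2, h3⟩, hW'⟩ := hW
    have hy : IsMinRepA n k y := by
      rcases h3 with rfl | rfl
      · exact h1
      · exact h2
    exact walk_end_minRep W y hW' hy

lemma walk_sum_le : ∀ (W : List (Fin n × Equiv.Perm (Fin (n + 1))))
    (x : Equiv.Perm (Fin (n+1))), IsWalkA n k x W →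
    sumA n k (walkEndA n x W) ≤ sumA n k x + W.length
  | [], x, _ => le_self_add
  | (i, y) :: W, x, hW => by
    obtain ⟨⟨h1, h2, h3⟩, hW'⟩ := hW
    have hdi := pattern_dichotomy (sorted_of_isMinRep h1) (sorted_of_isMinRep h2)
    have hstep : sumA n k y ≤ sumA n k x + 1 := by
      rcases h3 with rfl | rfl
      · omega
      · by_cases ha : ((x i.castSucc : ℕ) < k)
        · have hb : ¬ ((x i.succ : ℕ) < k) := fun hb => hdi ⟨fun _ => hb, fun _ => ha⟩
          rw [sumA_mul_aGen_up ha hb]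
        · have hb : ((x i.succ : ℕ) < k) := by
            by_contra hb
            exact hdi ⟨fun h => absurd h ha, fun h => absurd h hb⟩
          have := sumA_mul_aGen_down ha hb
          omega
    have := walk_sum_le W y hW'
    simp only [walkEndA, List.length_cons]
    omega

lemma walk_sum_eq_upWalk : ∀ (W : List (Fin n × Equiv.Perm (Fin (n + 1))))
    (x : Equiv.Perm (Fin (n+1))), IsWalkA n k x W →
    sumA n k (walkEndA n x W) = sumA n k x + W.length → UpWalkP n k x W
  | [], x, _, _ => trivial
  | (i, y) :: W, x, hW, hsum => by
    obtain ⟨⟨h1, h2, h3⟩, hW'⟩ := hW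
    have hdi := pattern_dichotomy (sorted_of_isMinRep h1) (sorted_of_isMinRep h2)
    have htail := walk_sum_le W y hW'
    simp only [walkEndA, List.length_cons] at hsum
    have hyge : sumA n k x + 1 ≤ sumA n k y := by omega
    have hup : ((x i.castSucc : ℕ) < k) ∧ ¬((x i.succ : ℕ) < k) ∧ y = x * aGen n i := by
      rcases h3 with rfl | rfl
      · exfalso; omega
      · by_cases ha : ((x i.castSucc : ℕ) < k)
        · have hb : ¬ ((x i.succ : ℕ) < k) := fun hb => hdi ⟨fun _ => hb, fun _ => ha⟩
          exact ⟨ha, hb, rfl⟩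
        · have hb : ((x i.succ : ℕ) < k) := by
            by_contra hb
            exact hdi ⟨fun h => absurd h ha, fun h => absurd h hb⟩
          have := sumA_mul_aGen_down ha hb
          exfalso; omega
    refine ⟨hup.1, hup.2.1, hup.2.2, ?_⟩
    apply walk_sum_eq_upWalk W y hW'
    have hstep := sumA_mul_aGen_up hup.1 hup.2.1
    rw [← hup.2.2] at hstep
    omega

lemma upWalk_unique : ∀ (W W' : List (Fin n × Equiv.Perm (Fin (n + 1))))
    (x : Equiv.Perm (Fin (n+1))), UpWalkP n k x W → UpWalkP n k x W' →
    W.map Prod.fst = W'.map Prod.fst → W = W'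
  | [], [], _, _, _, _ => rfl
  | [], (_, _) :: _, _, _, _, h => by simp at h
  | (_, _) :: _, [], _, _, _, h => by simp at h
  | (i, y) :: W, (i', y') :: W', x, hW, hW', hmap => by
    simp only [List.map_cons, List.cons.injEq] at hmap
    obtain ⟨rfl, hmap'⟩ := hmap
    obtain ⟨_, _, rfl, hW2⟩ := hW
    obtain ⟨_, _, rfl, hW2'⟩ := hW'
    rw [upWalk_unique W W' _ hW2 hW2' hmap']

lemma walkEndA_append (W : List (Fin n × Equiv.Perm (Fin (n + 1)))) (i : Fin n)
    (z : Equiv.Perm (Fin (n+1))) : ∀ x, walkEndA n x (W ++ [(i, z)]) = z := by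
  induction W with
  | nil => intro x; rfl
  | cons a W IH =>
    intro x
    obtain ⟨j, y⟩ := a
    simp only [List.cons_append, walkEndA]
    exact IH y

lemma isWalkA_append (W : List (Fin n × Equiv.Perm (Fin (n + 1)))) (i : Fin n)
    (z : Equiv.Perm (Fin (n+1))) : ∀ x, IsWalkA n k x W →
    GraphEdgeA n k (walkEndA n x W) i z → IsWalkA n k x (W ++ [(i, z)]) := by
  induction W with
  | nil => intro x _ he; exact ⟨he, trivial⟩
  | cons a W IH =>
    intro x hW he
    obtain ⟨j, y⟩ := a
    obtain ⟨he', hW'⟩ := hW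
    exact ⟨he', IH y hW' he⟩

/-- The key identity: the degree of any path is the number of positions where its endpoint's
bit-set exceeds the reference endpoint's bit-set, minus the same count at the start. -/
lemma walk_deg_eq : ∀ (T p : List (Fin n × Equiv.Perm (Fin (n + 1))))
    (x y : Equiv.Perm (Fin (n+1))), UpWalkP n k x T → IsWalkA n k y p →
    p.map Prod.fst = T.map Prod.fst →
    walkDegA n y p + (dCard n k y x : ℤ) = (dCard n k (walkEndA n y p) (walkEndA n x T) : ℤ)
  | [], p, x, y, _, _, hmap => by
    have hp : p = [] := by simpa using hmap
    subst hp
    simp [walkDegA, walkEndA]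
  | (i, z) :: T, [], x, y, _, _, hmap => by simp at hmap
  | (i, z) :: T, (i2, w) :: p, x, y, hT, hp, hmap => by
    simp only [List.map_cons, List.cons.injEq] at hmap
    obtain ⟨hi2, hmap'⟩ := hmap
    obtain ⟨hxa, hxb, hz, hT'⟩ := hT
    obtain ⟨⟨hm1, hm2, hyy⟩, hp'⟩ := hp
    rw [hz] at hT'
    rw [hi2] at hyy hm2
    have hdi := pattern_dichotomy (sorted_of_isMinRep hm1) (sorted_of_isMinRep hm2)
    simp only [walkDegA, walkEndA, hi2, hz]
    rcases hyy with h | h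
    · -- loop step
      rw [h] at hp' ⊢
      rw [if_pos rfl]
      have IH := walk_deg_eq T p (x * aGen n i) y hT' hp' hmap'
      have hex := dCard_exchange (x := x) (i := i) y hxa hxb
      by_cases hby : ((y i.castSucc : ℕ) < k)
      · have hby' : ¬ ((y i.succ : ℕ) < k) := fun hb => hdi ⟨fun _ => hb, fun _ => hby⟩
        have hsign : lenA n y < lenA n (y * aGen n i) := by
          apply lenA_lt_of_lt
          rw [Fin.lt_def]
          have := (y i.succ).isLt
          omega
        rw [if_pos hsign]
        rw [if_pos hby, if_neg hby'] at hex
        omega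
      · have hby' : ((y i.succ : ℕ) < k) := by
          by_contra hb
          exact hdi ⟨fun h' => absurd h' hby, fun h' => absurd h' hb⟩
        have hsign : ¬ lenA n y < lenA n (y * aGen n i) := by
          apply lenA_gt_of_gt
          rw [Fin.lt_def]
          omega
        rw [if_neg hsign]
        rw [if_neg hby, if_pos hby'] at hex
        omega
    · -- swap step
      rw [h] at hp' ⊢
      have hne : y * aGen n i ≠ y := by
        intro hcon
        exact aGen_ne_one i (mul_eq_left.mp hcon)
      rw [if_neg hne]
      have IH := walk_deg_eq T p (x * aGen n i) (y * aGen n i) hT' hp' hmap'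
      rw [dCard_mul_aGen_both] at IH
      omega

lemma dCard_self (x : Equiv.Perm (Fin (n+1))) : dCard n k x x = 0 := by
  rw [dCard, Finset.card_eq_zero, Finset.filter_eq_empty_iff]
  rintro q _ ⟨h1, h2⟩
  exact h2 h1

end DZPaux

namespace DZPaux

variable {n k : ℕ}

lemma card_lt_block (c : ℕ) (hc : c ≤ n + 1) :
    (Finset.univ.filter (fun v : Fin (n+1) => (v : ℕ) < c)).card = c := by
  have key : (Finset.univ.filter (fun v : Fin (n+1) => (v : ℕ) < c)).card
      = (Finset.range c).card := by
    refine Finset.card_bij (fun v _ => (v : ℕ)) ?_ ?_ ?_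
    · intro v hv
      rw [Finset.mem_filter] at hv
      rw [Finset.mem_range]
      exact hv.2
    · intro v₁ _ v₂ _ h
      exact Fin.ext h
    · intro m hm
      rw [Finset.mem_range] at hm
      exact ⟨⟨m, by omega⟩, by simp [hm], rfl⟩
  rw [key, Finset.card_range]

lemma card_bit (x : Equiv.Perm (Fin (n+1))) :
    (Finset.univ.filter (fun q : Fin (n+1) => (x q : ℕ) < k)).card =
    (Finset.univ.filter (fun v : Fin (n+1) => (v : ℕ) < k)).card := by
  apply Finset.card_bij (fun q _ => x q)
  · intro q hq
    rw [Finset.mem_filter] at hq ⊢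
    exact ⟨Finset.mem_univ _, hq.2⟩
  · intro q₁ _ q₂ _ h
    exact x.injective h
  · intro v hv
    rw [Finset.mem_filter] at hv
    exact ⟨x⁻¹ v, by simp [hv.2], by simp⟩

lemma bit_down {x : Equiv.Perm (Fin (n+1))}
    (hno : ∀ i : Fin n, ((x i.succ : ℕ) < k) → ((x i.castSucc : ℕ) < k)) :
    ∀ (d : ℕ) (q r : Fin (n+1)), (r : ℕ) + d = (q : ℕ) → ((x q : ℕ) < k) → ((x r : ℕ) < k) := by
  intro d
  induction d with
  | zero =>
    intro q r h hq
    have : r = q := Fin.ext (by omega)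
    rwa [this]
  | succ d IH =>
    intro q r h hq
    have hq1 : 1 ≤ (q : ℕ) := by omega
    have hqn : (q : ℕ) ≤ n := by
      have := q.isLt
      omega
    set i : Fin n := ⟨(q : ℕ) - 1, by omega⟩ with hi
    have his : (i.succ : Fin (n+1)) = q := Fin.ext (by simp [hi]; omega)
    have hprev : ((x i.castSucc : ℕ) < k) := hno i (by rwa [his])
    exact IH i.castSucc r (by simp [hi]; omega) hprev

lemma exists_walk_to (hk : k ≤ n + 1) : ∀ (m : ℕ) (x : Equiv.Perm (Fin (n+1))),
    IsMinRepA n k x → sumA n k x = m →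
    ∃ W : List (Fin n × Equiv.Perm (Fin (n + 1))),
      IsWalkA n k 1 W ∧ walkEndA n 1 W = x ∧ sumA n k x = sumA n k 1 + W.length := by
  intro m
  induction m using Nat.strong_induction_on with
  | _ m IH =>
    intro x hx hm
    have hxs := sorted_of_isMinRep hx
    by_cases h01 : ∃ i : Fin n, ¬((x i.castSucc : ℕ) < k) ∧ ((x i.succ : ℕ) < k)
    · obtain ⟨i, hna, hbb⟩ := h01
      have hdi : ¬(((x i.castSucc : ℕ) < k) ↔ ((x i.succ : ℕ) < k)) :=
        fun hiff => hna (hiff.mpr hbb)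
      have hxs' : SortedP n k (x * aGen n i) := sortedP_mul_aGen hxs hdi
      have hx' : IsMinRepA n k (x * aGen n i) := isMinRep_of_sorted hxs'
      have hsum : sumA n k x = sumA n k (x * aGen n i) + 1 := sumA_mul_aGen_down hna hbb
      obtain ⟨W', hW', hWend', hWlen'⟩ :=
        IH (sumA n k (x * aGen n i)) (by omega) (x * aGen n i) hx' rfl
      have hxx : (x * aGen n i) * aGen n i = x := by
        rw [mul_assoc, aGen_mul_self, mul_one]
      refine ⟨W' ++ [(i, x)], ?_, ?_, ?_⟩
      · apply isWalkA_append W' i x 1 hW'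
        rw [hWend']
        refine ⟨hx', ?_, Or.inr hxx.symm⟩
        rw [hxx]
        exact hx
      · exact walkEndA_append W' i x 1
      · rw [List.length_append, List.length_singleton]
        omega
    · push_neg at h01
      have hno : ∀ i : Fin n, ((x i.succ : ℕ) < k) → ((x i.castSucc : ℕ) < k) := by
        intro i hb
        by_contra ha
        have := h01 i (not_lt.mp ha)
        omega
      have hbits : ∀ q : Fin (n+1), ((x q : ℕ) < k) ↔ ((q : ℕ) < k) := by
        intro q
        constructor
        · intro hq
          by_contra hqk
          have hsub : (Finset.univ.filter (fun r : Fin (n+1) => (r : ℕ) < (q : ℕ) + 1)) ⊆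
              (Finset.univ.filter (fun r : Fin (n+1) => (x r : ℕ) < k)) := by
            intro r hr
            rw [Finset.mem_filter] at hr ⊢
            refine ⟨Finset.mem_univ _, ?_⟩
            exact bit_down hno ((q : ℕ) - (r : ℕ)) q r (by omega) hq
          have hc1 := card_lt_block (n := n) ((q : ℕ) + 1) (by have := q.isLt; omega)
          have hc2 := card_bit (n := n) (k := k) x
          have hc3 := card_lt_block (n := n) k hk
          have := Finset.card_le_card hsub
          omega
        · intro hqk
          by_contra hq
          have hsub : (Finset.univ.filter (fun r : Fin (n+1) => (x r : ℕ) < k)) ⊆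
              (Finset.univ.filter (fun r : Fin (n+1) => (r : ℕ) < (q : ℕ))) := by
            intro r hr
            rw [Finset.mem_filter] at hr ⊢
            refine ⟨Finset.mem_univ _, ?_⟩
            by_contra hrq
            exact hq (bit_down hno ((r : ℕ) - (q : ℕ)) r q (by omega) hr.2)
          have hc1 := card_lt_block (n := n) (q : ℕ) (by have := q.isLt; omega)
          have hc2 := card_bit (n := n) (k := k) x
          have hc3 := card_lt_block (n := n) k hk
          have := Finset.card_le_card hsub
          omega
      have hx1 : x = 1 := by
        apply sorted_unique hxs sortedP_one
        intro q
        simp only [Equiv.Perm.one_apply]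
        exact hbits q
      subst hx1
      exact ⟨[], trivial, rfl, by simp⟩

end DZPaux

open DZPaux

/-- In type `(Aₙ, A_{k-1} × A_{n-k})`, let `T` be a reduced (shortest possible) path `T^μ`
from the identity coset `∅` to `μ` in the extended Bruhat graph.  If a path `p` from `∅`
whose weight equals the weight of `T^μ` ends at `λ` and has degree `0`, then `λ = μ` and
`p = T^μ`.  (Equivalently `Δ_{λ,μ} = 1` iff `λ = μ`, so `B = Id` and `Δ = N`.) -/
theorem degree_zero_path_eq_reduced_path (n k : ℕ) (hk : k ≤ n + 1)
    (μ : Equiv.Perm (Fin (n + 1))) (T : List (Fin n × Equiv.Perm (Fin (n + 1))))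
    (hT : IsWalkA n k 1 T) (hTend : walkEndA n 1 T = μ)
    (hTmin : ∀ T' : List (Fin n × Equiv.Perm (Fin (n + 1))),
      IsWalkA n k 1 T' → walkEndA n 1 T' = μ → T.length ≤ T'.length)
    (p : List (Fin n × Equiv.Perm (Fin (n + 1)))) (lam : Equiv.Perm (Fin (n + 1)))
    (hp : IsWalkA n k 1 p) (hw : p.map Prod.fst = T.map Prod.fst)
    (hend : walkEndA n 1 p = lam) (hdeg : walkDegA n 1 p = 0) :
    lam = μ ∧ p = T := by
  classical
  have hlen : p.length = T.length := by
    have := congrArg List.length hw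
    simpa using this
  have hμrep : IsMinRepA n k μ := by
    rw [← hTend]
    exact walk_end_minRep T 1 hT isMinRepA_one
  obtain ⟨W, hW, hWend, hWlen⟩ := exists_walk_to hk (sumA n k μ) μ hμrep rfl
  have h1 : T.length ≤ W.length := hTmin W hW hWend
  have h2 : sumA n k μ ≤ sumA n k 1 + T.length := by
    have := walk_sum_le T 1 hT
    rwa [hTend] at this
  have hTlen : sumA n k (walkEndA n 1 T) = sumA n k 1 + T.length := by
    rw [hTend]; omega
  have hTup : UpWalkP n k 1 T := walk_sum_eq_upWalk T 1 hT hTlen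
  have hid := walk_deg_eq T p 1 1 hTup hp hw
  rw [hend, hTend, hdeg, dCard_self] at hid
  have hd0 : dCard n k lam μ = 0 := by
    have : ((dCard n k lam μ : ℤ)) = 0 := by omega
    exact_mod_cast this
  have hsub : (Finset.univ.filter (fun q : Fin (n+1) => (lam q : ℕ) < k)) ⊆
      (Finset.univ.filter (fun q : Fin (n+1) => (μ q : ℕ) < k)) := by
    rw [dCard, Finset.card_eq_zero, Finset.filter_eq_empty_iff] at hd0
    intro q hq
    rw [Finset.mem_filter] at hq ⊢
    refine ⟨Finset.mem_univ _, ?_⟩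
    by_contra hcon
    exact hd0 (Finset.mem_univ q) ⟨hq.2, hcon⟩
  have hcards : (Finset.univ.filter (fun q : Fin (n+1) => (μ q : ℕ) < k)).card ≤
      (Finset.univ.filter (fun q : Fin (n+1) => (lam q : ℕ) < k)).card := by
    rw [card_bit lam, card_bit μ]
  have hAeq := Finset.eq_of_subset_of_card_le hsub hcards
  have hbits : ∀ q : Fin (n+1), ((lam q : ℕ) < k ↔ (μ q : ℕ) < k) := by
    intro q
    have := Finset.ext_iff.mp hAeq q
    simpa using this
  have hlamrep : IsMinRepA n k lam := by
    rw [← hend]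
    exact walk_end_minRep p 1 hp isMinRepA_one
  have hlamμ : lam = μ :=
    sorted_unique (sorted_of_isMinRep hlamrep) (sorted_of_isMinRep hμrep) hbits
  refine ⟨hlamμ, ?_⟩
  have hsums : sumA n k lam = sumA n k μ := by
    rw [sumA, sumA, hAeq]
  have hpend : sumA n k (walkEndA n 1 p) = sumA n k 1 + p.length := by
    rw [hend, hsums, hlen]
    omega
  have hpup : UpWalkP n k 1 p := walk_sum_eq_upWalk p 1 hp hpend
  exact upWalk_unique p T 1 hpup hTup hw
end
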